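/- arXiv:2007.06203 — 10 statements merged into one kernel-verified Lean document; each statement's English description precedes it below -/
import Mathlib

section
/- For finite J, K the ultra-discrete KdV map satisfies empty space-particle duality: F^{(J,K)} = σ ∘ F^{(J,K)} ∘ σ, where σ(x,u) = (J−x, K−u). -/
/-! With `s = x + u`, the involution `σ` sends `s` to `J + K - s`, so the two cut-offs
`max (s - J) 0` and `max (s - K) 0` trade places up to the identity
`max (-a) 0 = max a 0 - a`; the linear parts left over cancel against the affine shifts of `σ`. -/

theorem max_neg_zero_eq_max_zero_sub {α : Type*} [AddCommGroup α] [LinearOrder α]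
    [IsOrderedAddMonoid α] (a : α) : max (-a) 0 = max a 0 - a :=
  eq_sub_of_add_eq' (sub_eq_iff_eq_add.mp (max_zero_sub_max_neg_zero_eq_self a)).symm

theorem udKdV_empty_space_particle_duality (J K : ℝ)
    (F : ℝ × ℝ → ℝ × ℝ)
    (hF : ∀ x u : ℝ, F (x, u) =
      (u - max (x + u - J) 0 + max (x + u - K) 0,
       x - max (x + u - K) 0 + max (x + u - J) 0))
    (σ : ℝ × ℝ → ℝ × ℝ) (hσ : ∀ x u : ℝ, σ (x, u) = (J - x, K - u)) :
    F = σ ∘ F ∘ σ := by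
  funext ⟨x, u⟩
  have hJ : max (J - x + (K - u) - J) 0 = max (x + u - K) 0 - (x + u - K) := by
    rw [← max_neg_zero_eq_max_zero_sub]; ring_nf
  have hK : max (J - x + (K - u) - K) 0 = max (x + u - J) 0 - (x + u - J) := by
    rw [← max_neg_zero_eq_max_zero_sub]; ring_nf
  simp only [Function.comp_apply, hσ, hF, hJ, hK]
  ext <;> ring
end

section
/- If X ~ stExp(λ, c, J−c) and U ~ stExp(λ, c, K−c) are independent, where λ ∈ ℝ, c < min{J/2, K/2} and J, K are finite reals, then F^{(J,K)}(X,U) has the same joint distribution as (X,U). -/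
/-!
The map `F = udKdV J K` sends `(x, u)` to `(u + t, x - t)` with a transfer `t` depending only on
`s = x + u`. Such a map is a composition of three shears, so it preserves Lebesgue measure on the
plane; it is moreover an involution mapping the box `[c, J - c] × [c, K - c]` into itself. The
joint density of `(X, U)` is a constant times `exp (-λ (x + u))` on that box, so it is invariant
under `F`, and a measure-preserving map fixes every measure whose density it leaves invariant.
-/

open MeasureTheory Set
open scoped ENNReal

theorem MeasureTheory.MeasurePreserving.map_withDensity_of_comp_eq {α : Type*}
    [MeasurableSpace α] {μ : Measure α} {T : α → α} {ρ : α → ℝ≥0∞}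
    (hT : MeasurePreserving T μ μ) (hρ : Measurable ρ) (hρT : ∀ x, ρ (T x) = ρ x) :
    (μ.withDensity ρ).map T = μ.withDensity ρ := by
  ext s hs
  rw [Measure.map_apply hT.measurable hs, withDensity_apply _ (hT.measurable hs),
    withDensity_apply _ hs, ← hT.setLIntegral_comp_preimage hs hρ]
  simp only [hρT]

theorem measurePreserving_swap_add_transfer {t : ℝ → ℝ} (ht : Measurable t) :
    MeasurePreserving (fun p : ℝ × ℝ => (p.2 + t (p.1 + p.2), p.1 - t (p.1 + p.2))) := by
  -- `(x, u) ↦ (s, u) ↦ (s, x - t s) ↦ (u + t s, x - t s)`, where `s = x + u`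
  have reflect : MeasurePreserving (fun q : ℝ × ℝ => (q.1, q.1 - t q.1 - q.2)) :=
    (MeasurePreserving.id volume).skew_product (by fun_prop)
      (.of_forall fun a => Measure.map_sub_left_eq_self volume (a - t a))
  rw [Measure.volume_eq_prod] at reflect ⊢
  convert ((measurePreserving_sub_prod volume volume).comp reflect).comp
    (measurePreserving_add_prod volume volume) using 1
  funext p
  simp only [Function.comp_apply]
  exact Prod.ext (by ring) (by ring)

def udKdV (J K : ℝ) (p : ℝ × ℝ) : ℝ × ℝ :=
  (p.2 - max (p.1 + p.2 - J) 0 + max (p.1 + p.2 - K) 0,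
    p.1 - max (p.1 + p.2 - K) 0 + max (p.1 + p.2 - J) 0)

theorem udKdV_fst_add_snd (J K : ℝ) (p : ℝ × ℝ) :
    (udKdV J K p).1 + (udKdV J K p).2 = p.1 + p.2 := by
  simp only [udKdV]; ring

theorem udKdV_involutive (J K : ℝ) : Function.Involutive (udKdV J K) := by
  intro p
  conv_lhs => rw [udKdV, udKdV_fst_add_snd]
  simp only [udKdV]
  exact Prod.ext (by ring) (by ring)

theorem measurePreserving_udKdV (J K : ℝ) : MeasurePreserving (udKdV J K) := by
  convert measurePreserving_swap_add_transfer
    (t := fun s => max (s - K) 0 - max (s - J) 0) (by fun_prop) using 1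
  funext p
  exact Prod.ext (by simp only [udKdV]; ring) (by simp only [udKdV]; ring)

theorem mapsTo_udKdV_Icc_prod_Icc {J K c : ℝ} :
    MapsTo (udKdV J K) (Icc c (J - c) ×ˢ Icc c (K - c)) (Icc c (J - c) ×ˢ Icc c (K - c)) := by
  rintro ⟨x, u⟩ ⟨⟨hx₁, hx₂⟩, hu₁, hu₂⟩
  simp only [udKdV, mem_prod, mem_Icc, max_def]
  split_ifs <;> refine ⟨⟨?_, ?_⟩, ?_, ?_⟩ <;> linarith

theorem preimage_udKdV_Icc_prod_Icc {J K c : ℝ} :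
    udKdV J K ⁻¹' (Icc c (J - c) ×ˢ Icc c (K - c)) = Icc c (J - c) ×ˢ Icc c (K - c) := by
  refine Subset.antisymm (fun p hp => ?_) mapsTo_udKdV_Icc_prod_Icc
  simpa only [udKdV_involutive J K p] using mapsTo_udKdV_Icc_prod_Icc hp

/-- The density of `stExp(lam, a, b)`, with `Z` standing for the normalising constant. -/
noncomputable def stExpDensity (lam Z a b x : ℝ) : ℝ≥0∞ :=
  ENNReal.ofReal (if x ∈ Icc a b then Z * Real.exp (-lam * x) else 0)

@[fun_prop]
theorem measurable_stExpDensity (lam Z a b : ℝ) : Measurable (stExpDensity lam Z a b) :=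
  (Measurable.ite measurableSet_Icc (by fun_prop) measurable_const).ennreal_ofReal

theorem stExpDensity_mul_stExpDensity {lam Z₁ Z₂ a₁ b₁ a₂ b₂ : ℝ} (hZ₁ : 0 ≤ Z₁)
    (p : ℝ × ℝ) :
    stExpDensity lam Z₁ a₁ b₁ p.1 * stExpDensity lam Z₂ a₂ b₂ p.2 =
      (Icc a₁ b₁ ×ˢ Icc a₂ b₂).indicator
        (fun q => ENNReal.ofReal (Z₁ * Z₂ * Real.exp (-lam * (q.1 + q.2)))) p := by
  simp only [stExpDensity, indicator_apply, mem_prod]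
  by_cases h₁ : p.1 ∈ Icc a₁ b₁
  · by_cases h₂ : p.2 ∈ Icc a₂ b₂
    · rw [if_pos h₁, if_pos h₂, if_pos ⟨h₁, h₂⟩, ← ENNReal.ofReal_mul (by positivity), mul_add,
        Real.exp_add]
      congr 1
      ring
    · simp [h₂]
  · simp [h₁]

theorem stExpDensity_prod_comp_udKdV {lam Z₁ Z₂ J K c : ℝ} (hZ₁ : 0 ≤ Z₁)
    (p : ℝ × ℝ) :
    stExpDensity lam Z₁ c (J - c) (udKdV J K p).1 * stExpDensity lam Z₂ c (K - c) (udKdV J K p).2 =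
      stExpDensity lam Z₁ c (J - c) p.1 * stExpDensity lam Z₂ c (K - c) p.2 := by
  rw [stExpDensity_mul_stExpDensity hZ₁, stExpDensity_mul_stExpDensity hZ₁,
    ← indicator_comp_right, preimage_udKdV_Icc_prod_Icc]
  simp only [Function.comp_def, udKdV_fst_add_snd]

theorem udKdV_stExp_detailed_balance_general (J K lam c : ℝ)
    (μ ν : Measure ℝ) [IsProbabilityMeasure μ] [IsProbabilityMeasure ν]
    (Z₁ Z₂ : ℝ) (hZ₁ : 0 < Z₁)
    (hμ : μ = volume.withDensity fun x =>
      ENNReal.ofReal (if x ∈ Set.Icc c (J - c) then Z₁ * Real.exp (-lam * x) else 0))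
    (hν : ν = volume.withDensity fun x =>
      ENNReal.ofReal (if x ∈ Set.Icc c (K - c) then Z₂ * Real.exp (-lam * x) else 0))
    (F : ℝ × ℝ → ℝ × ℝ)
    (hF : ∀ x u : ℝ, F (x, u) =
      (u - max (x + u - J) 0 + max (x + u - K) 0,
       x - max (x + u - K) 0 + max (x + u - J) 0)) :
    Measure.map F (μ.prod ν) = μ.prod ν := by
  obtain rfl : F = udKdV J K := funext fun p => hF p.1 p.2
  change μ = volume.withDensity (stExpDensity lam Z₁ c (J - c)) at hμ
  change ν = volume.withDensity (stExpDensity lam Z₂ c (K - c)) at hν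
  rw [hμ, hν, prod_withDensity (measurable_stExpDensity ..) (measurable_stExpDensity ..),
    ← Measure.volume_eq_prod]
  exact (measurePreserving_udKdV J K).map_withDensity_of_comp_eq (by fun_prop)
    (stExpDensity_prod_comp_udKdV hZ₁.le)

theorem udKdV_stExp_detailed_balance (J K lam c : ℝ)
    (hc : c < min (J / 2) (K / 2))
    (μ ν : Measure ℝ) [IsProbabilityMeasure μ] [IsProbabilityMeasure ν]
    (Z₁ Z₂ : ℝ) (hZ₁ : 0 < Z₁) (hZ₂ : 0 < Z₂)
    (hμ : μ = volume.withDensity fun x =>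
      ENNReal.ofReal (if x ∈ Set.Icc c (J - c) then Z₁ * Real.exp (-lam * x) else 0))
    (hν : ν = volume.withDensity fun x =>
      ENNReal.ofReal (if x ∈ Set.Icc c (K - c) then Z₂ * Real.exp (-lam * x) else 0))
    (F : ℝ × ℝ → ℝ × ℝ)
    (hF : ∀ x u : ℝ, F (x, u) =
      (u - max (x + u - J) 0 + max (x + u - K) 0,
       x - max (x + u - K) 0 + max (x + u - J) 0)) :
    Measure.map F (μ.prod ν) = μ.prod ν :=
  udKdV_stExp_detailed_balance_general J K lam c μ ν Z₁ Z₂ hZ₁ hμ hν F hF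
end

section
/- If J > K and (x_n)_{n∈ℤ} is a real sequence with x_n + x_{n+1} ≤ K for infinitely many n tending to −∞, then there exists at most one sequence (u_n)_{n∈ℤ} satisfying u_n = x_n − max{x_n + u_{n−1} − K, 0} + max{x_n + u_{n−1} − J, 0} for all n. In particular, if x_n + x_{n+1} ≤ K then any such solution satisfies u_{n+1} = x_{n+1}. -/
/-!
Since `J > K`, the carrier never exceeds the input: `u n ≤ x n`. Hence whenever
`x n + x (n + 1) ≤ K`, both `max` terms vanish at step `n + 1` and `u (n + 1) = x (n + 1)`,
whatever `u` is. Two solutions therefore agree at indices tending to `-∞`, and the forward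
recursion propagates the agreement to every index.
-/

theorem Int.eq_of_forall_eq_sub_one_of_frequently_eq {α : Type*} {f : ℤ → α → α}
    {u v : ℤ → α} (hu : ∀ n, u n = f n (u (n - 1))) (hv : ∀ n, v n = f n (v (n - 1)))
    (hfreq : ∀ N, ∃ m ≤ N, u m = v m) : u = v := by
  funext n
  obtain ⟨m, hmn, hm⟩ := hfreq n
  induction n, hmn using Int.leInduction with
  | base => exact hm
  | succ k _ ih => rw [hu, hv, add_sub_cancel_right, ih]

section Carrier

variable {J K x u : ℝ}

/-- The second coordinate `(F^{(J,K)})^{(2)}(x, u)` of the ultra-discrete KdV map. -/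
def udKdVCarrier (J K x u : ℝ) : ℝ :=
  x - max (x + u - K) 0 + max (x + u - J) 0

theorem udKdVCarrier_le (hKJ : K ≤ J) : udKdVCarrier J K x u ≤ x := by
  have : max (x + u - J) 0 ≤ max (x + u - K) 0 := max_le_max (by linarith) le_rfl
  unfold udKdVCarrier
  linarith

theorem udKdVCarrier_eq_self (hKJ : K ≤ J) (h : x + u ≤ K) : udKdVCarrier J K x u = x := by
  unfold udKdVCarrier
  rw [max_eq_right (by linarith), max_eq_right (by linarith)]
  ring

end Carrier

theorem udKdV_carrier_uniqueness (J K : ℝ) (hJK : K < J)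
    (x : ℤ → ℝ)
    (hsync : ∀ N : ℤ, ∃ n : ℤ, n < N ∧ x n + x (n + 1) ≤ K) :
    ((∀ u u' : ℤ → ℝ,
        (∀ n : ℤ, u n = x n - max (x n + u (n - 1) - K) 0 + max (x n + u (n - 1) - J) 0) →
        (∀ n : ℤ, u' n = x n - max (x n + u' (n - 1) - K) 0 + max (x n + u' (n - 1) - J) 0) →
        u = u') ∧
      (∀ u : ℤ → ℝ,
        (∀ n : ℤ, u n = x n - max (x n + u (n - 1) - K) 0 + max (x n + u (n - 1) - J) 0) →
        ∀ n : ℤ, x n + x (n + 1) ≤ K → u (n + 1) = x (n + 1))) := by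
  have reset : ∀ u : ℤ → ℝ, (∀ n, u n = udKdVCarrier J K (x n) (u (n - 1))) →
      ∀ n, x n + x (n + 1) ≤ K → u (n + 1) = x (n + 1) := by
    intro u hu n hn
    have hle : u n ≤ x n := (hu n).trans_le (udKdVCarrier_le hJK.le)
    rw [hu, add_sub_cancel_right]
    exact udKdVCarrier_eq_self hJK.le (by linarith)
  refine ⟨fun u u' hu hu' => ?_, reset⟩
  refine Int.eq_of_forall_eq_sub_one_of_frequently_eq (f := fun n => udKdVCarrier J K (x n))
    hu hu' fun N => ?_
  obtain ⟨m, hmN, hm⟩ := hsync N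
  exact ⟨m + 1, by omega, by rw [reset u hu m hm, reset u' hu' m hm]⟩
end

section
/- The discrete KdV map preserves the quantities xu and αx + x^{−1} + βu + u^{−1}: if (y,v) = F(x,u) then xu = yv and αx + x^{−1} + βu + u^{−1} = αy + y^{−1} + βv + v^{−1}. -/
/-!
Write `a = 1 + αxu`, `b = 1 + βxu`, so that `y = u b / a` and `v = x a / b`; the product
`xu = yv` is then immediate. The second invariant splits into two exchanged pairs:
`αy + v⁻¹ = b (αxu + 1) / (x a) = b / x = x⁻¹ + βu` and, symmetrically,
`βv + y⁻¹ = a / u = u⁻¹ + αx`.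
-/

section

variable {K : Type*} [Field K]

theorem mul_div_mul_div_cancel {x u a b : K} (ha : a ≠ 0) (hb : b ≠ 0) :
    u * b / a * (x * a / b) = x * u := by
  field_simp

theorem dKdV_pair_exchange {α β x u a b : K} (hx : x ≠ 0) (ha : a ≠ 0)
    (ha_eq : a = 1 + α * (x * u)) (hb_eq : b = 1 + β * (x * u)) :
    α * (u * b / a) + (x * a / b)⁻¹ = x⁻¹ + β * u := by
  calc α * (u * b / a) + (x * a / b)⁻¹ = b * (1 + α * (x * u)) / (x * a) := by
        rw [inv_div]; field_simp; ring
    _ = b / x := by rw [← ha_eq]; field_simp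
    _ = x⁻¹ + β * u := by rw [hb_eq]; field_simp

end

theorem dKdV_conserved_quantities (α β : ℝ) (hα : 0 ≤ α) (hβ : 0 ≤ β)
    (x u : ℝ) (hx : 0 < x) (hu : 0 < u)
    (y v : ℝ)
    (hy : y = u * (1 + β * x * u) / (1 + α * x * u))
    (hv : v = x * (1 + α * x * u) / (1 + β * x * u)) :
    x * u = y * v ∧
      α * x + x⁻¹ + β * u + u⁻¹ = α * y + y⁻¹ + β * v + v⁻¹ := by
  have ha : 1 + α * x * u ≠ 0 := by positivity
  have hb : 1 + β * x * u ≠ 0 := by positivity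
  simp only [mul_assoc] at ha hb hy hv
  subst hy hv
  refine ⟨(mul_div_mul_div_cancel ha hb).symm, ?_⟩
  have hαy := dKdV_pair_exchange (β := β) hx.ne' ha rfl rfl
  have hβv := dKdV_pair_exchange (α := β) (β := α) (x := u) (u := x)
    (b := 1 + α * (x * u)) hu.ne' hb (by rw [mul_comm u x]) (by rw [mul_comm u x])
  linear_combination -hαy - hβv
end

section
/- If X ~ GIG(λ, cα, c) and U ~ GIG(λ, cβ, c) are independent, with c > 0, α, β > 0 and λ ∈ ℝ, then F(X,U) has the same joint distribution as (X,U), where F is the discrete KdV map with parameters (α, β). -/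
/-!
At `(x, u)` in the open positive quadrant the product of the two GIG densities is, up to constants,
`(x u)^(-λ-1) exp(-c (α x + β u + 1/x + 1/u))`, and both `x u` and `α x + β u + 1/x + 1/u` are
invariant under the dKdV map `F`. On that quadrant `F` is a smooth involution with Jacobian
determinant `-1`, hence preserves Lebesgue measure; off the quadrant the density vanishes.
-/

open MeasureTheory Set ENNReal ContinuousLinearMap

theorem MeasureTheory.Measure.map_withDensity_of_comp_ae_eq {X : Type*} [MeasurableSpace X]
    {μ : Measure X} {f : X → X} (hf : Measurable f) (hμ : μ.map f = μ)
    {ρ : X → ℝ≥0∞} (hρ : Measurable ρ) (hρf : ρ ∘ f =ᵐ[μ] ρ) :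
    (μ.withDensity ρ).map f = μ.withDensity ρ := by
  have hcomp : (μ.withDensity (ρ ∘ f)).map f = (μ.map f).withDensity ρ := by
    ext A hA
    rw [Measure.map_apply hf hA, withDensity_apply _ (hf hA), withDensity_apply _ hA,
      setLIntegral_map hA hρ hf]
    rfl
  conv_lhs => rw [← withDensity_congr_ae hρf]
  rw [hcomp, hμ]

theorem MeasureTheory.Measure.map_restrict_eq_of_leftInvOn_self {E : Type*}
    [NormedAddCommGroup E] [NormedSpace ℝ E] [FiniteDimensional ℝ E]
    [MeasurableSpace E] [BorelSpace E] (μ : Measure E) [μ.IsAddHaarMeasure]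
    {s : Set E} (hs : MeasurableSet s) {f : E → E} {f' : E → E →L[ℝ] E}
    (hf' : ∀ x ∈ s, HasFDerivWithinAt f (f' x) s x) (hdet : ∀ x ∈ s, |(f' x).det| = 1)
    (hmaps : MapsTo f s s) (hinv : LeftInvOn f f s) :
    (μ.restrict s).map f = μ.restrict s := by
  have hbij : BijOn f s s := InvOn.bijOn ⟨hinv, hinv⟩ hmaps hmaps
  have hjac := map_withDensity_abs_det_fderiv_eq_addHaar μ hs.nullMeasurableSet hf' hbij.injOn
  have hone : ((μ.restrict s).withDensity fun x => ENNReal.ofReal |(f' x).det|) = μ.restrict s := by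
    conv_rhs => rw [← withDensity_one (μ := μ.restrict s)]
    refine withDensity_congr_ae ((ae_restrict_iff' hs).2 (.of_forall fun x hx => ?_))
    simp [hdet x hx]
  rwa [hone, hbij.image_eq] at hjac

theorem HasFDerivAt.fun_div {E : Type*} [NormedAddCommGroup E] [NormedSpace ℝ E]
    {c d : E → ℝ} {c' d' : E →L[ℝ] ℝ} {x : E}
    (hc : HasFDerivAt c c' x) (hd : HasFDerivAt d d' x) (hx : d x ≠ 0) :
    HasFDerivAt (fun y => c y / d y) ((d x)⁻¹ • c' - (c x / d x ^ 2) • d') x := by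
  have h := hc.mul ((hasDerivAt_inv hx).comp_hasFDerivAt x hd)
  simp only [Function.comp_def] at h
  refine h.congr_fderiv (ContinuousLinearMap.ext fun v => ?_)
  simp only [neg_smul, smul_neg, add_apply, neg_apply, smul_apply, smul_eq_mul, sub_apply]
  ring

noncomputable def dKdV (α β : ℝ) (p : ℝ × ℝ) : ℝ × ℝ :=
  (p.2 * (1 + β * p.1 * p.2) / (1 + α * p.1 * p.2),
    p.1 * (1 + α * p.1 * p.2) / (1 + β * p.1 * p.2))

noncomputable def fderivDKdV (α β x u : ℝ) : ℝ × ℝ →L[ℝ] ℝ × ℝ :=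
  let A := 1 + α * x * u
  let B := 1 + β * x * u
  (Matrix.toLin (.finTwoProd ℝ) (.finTwoProd ℝ)
    !![(β - α) * u ^ 2 / A ^ 2, (A * B + (β - α) * x * u) / A ^ 2;
       (A * B + (α - β) * x * u) / B ^ 2, (α - β) * x ^ 2 / B ^ 2]).toContinuousLinearMap

section dKdV

variable {α β x u : ℝ}

theorem measurable_dKdV : Measurable (dKdV α β) := by
  unfold dKdV
  fun_prop

theorem dKdV_fst_mul_snd (hA : 1 + α * x * u ≠ 0) (hB : 1 + β * x * u ≠ 0) :
    (dKdV α β (x, u)).1 * (dKdV α β (x, u)).2 = x * u := by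
  rw [dKdV, div_mul_div_comm, div_eq_iff (mul_ne_zero hA hB)]
  ring

theorem dKdV_dKdV (hA : 1 + α * x * u ≠ 0) (hB : 1 + β * x * u ≠ 0) :
    dKdV α β (dKdV α β (x, u)) = (x, u) := by
  have hprod := dKdV_fst_mul_snd hA hB
  -- the outer map sees `(y, v)` only through `y v = x u` in its factors `1 + α y v`, `1 + β y v`
  conv_lhs => rw [dKdV, mul_assoc α, mul_assoc β, hprod, ← mul_assoc, ← mul_assoc]
  simp only [dKdV]
  -- `field_simp` cancels the two factors only once they are atoms
  generalize 1 + α * x * u = A at *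
  generalize 1 + β * x * u = B at *
  ext <;> field_simp

theorem dKdV_conserved (hx : x ≠ 0) (hu : u ≠ 0)
    (hA : 1 + α * x * u ≠ 0) (hB : 1 + β * x * u ≠ 0) :
    α * (dKdV α β (x, u)).1 + β * (dKdV α β (x, u)).2 + (dKdV α β (x, u)).1⁻¹ +
        (dKdV α β (x, u)).2⁻¹ = α * x + β * u + x⁻¹ + u⁻¹ := by
  simp only [dKdV]
  generalize hAdef : 1 + α * x * u = A at *
  generalize hBdef : 1 + β * x * u = B at *
  field_simp
  rw [← hAdef, ← hBdef]
  ring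

theorem hasFDerivAt_dKdV (hA : 1 + α * x * u ≠ 0) (hB : 1 + β * x * u ≠ 0) :
    HasFDerivAt (dKdV α β) (fderivDKdV α β x u) (x, u) := by
  have hfst : HasFDerivAt (Prod.fst : ℝ × ℝ → ℝ) (fst ℝ ℝ ℝ) (x, u) := hasFDerivAt_fst
  have hsnd : HasFDerivAt (Prod.snd : ℝ × ℝ → ℝ) (snd ℝ ℝ ℝ) (x, u) := hasFDerivAt_snd
  have hA' := ((hfst.const_mul α).mul hsnd).const_add 1
  have hB' := ((hfst.const_mul β).mul hsnd).const_add 1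
  refine ((hsnd.mul hB').fun_div hA' hA |>.prodMk ((hfst.mul hA').fun_div hB' hB)).congr_fderiv ?_
  rw [fderivDKdV, Matrix.toLin_finTwoProd_toContinuousLinearMap]
  congr 1 <;> ext <;>
    simp only [Pi.mul_apply, smul_add, sub_comp, add_comp, smul_comp, fst_comp_inl, fst_comp_inr,
      snd_comp_inl, snd_comp_inr, smul_zero, zero_add, add_zero, sub_apply, add_apply, smul_apply,
      id_apply, smul_eq_mul, mul_one] <;>
    field_simp <;> ring

theorem det_fderivDKdV (hA : 1 + α * x * u ≠ 0) (hB : 1 + β * x * u ≠ 0) :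
    (fderivDKdV α β x u).det = -1 := by
  simp only [fderivDKdV, LinearMap.det_toContinuousLinearMap, LinearMap.det_toLin,
    Matrix.det_fin_two_of]
  generalize 1 + α * x * u = A at *
  generalize 1 + β * x * u = B at *
  field_simp
  ring

theorem one_add_mul_mul_pos {γ : ℝ} (hγ : 0 ≤ γ) {p : ℝ × ℝ} (hp : p ∈ Ioi 0 ×ˢ Ioi 0) :
    0 < 1 + γ * p.1 * p.2 := by
  obtain ⟨hx, hu⟩ := hp
  have : 0 ≤ γ * p.1 * p.2 := mul_nonneg (mul_nonneg hγ (le_of_lt hx)) (le_of_lt hu)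
  linarith

theorem mapsTo_dKdV (hα : 0 ≤ α) (hβ : 0 ≤ β) :
    MapsTo (dKdV α β) (Ioi 0 ×ˢ Ioi 0) (Ioi 0 ×ˢ Ioi 0) := by
  intro p hp
  have hA := one_add_mul_mul_pos hα hp
  have hB := one_add_mul_mul_pos hβ hp
  obtain ⟨hx, hu⟩ := hp
  exact ⟨div_pos (mul_pos hu hB) hA, div_pos (mul_pos hx hA) hB⟩

theorem map_dKdV_volume_restrict (hα : 0 ≤ α) (hβ : 0 ≤ β) :
    (volume.restrict (Ioi 0 ×ˢ Ioi 0)).map (dKdV α β) = volume.restrict (Ioi 0 ×ˢ Ioi 0) := by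
  refine Measure.map_restrict_eq_of_leftInvOn_self volume (measurableSet_Ioi.prod measurableSet_Ioi)
    (f' := fun p => fderivDKdV α β p.1 p.2) (fun p hp => ?_) (fun p hp => ?_) (mapsTo_dKdV hα hβ)
    (fun p hp => ?_)
  · exact (hasFDerivAt_dKdV (one_add_mul_mul_pos hα hp).ne'
      (one_add_mul_mul_pos hβ hp).ne').hasFDerivWithinAt
  · rw [det_fderivDKdV (one_add_mul_mul_pos hα hp).ne' (one_add_mul_mul_pos hβ hp).ne']
    norm_num
  · exact dKdV_dKdV (one_add_mul_mul_pos hα hp).ne' (one_add_mul_mul_pos hβ hp).ne'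

end dKdV

noncomputable def gigDensity (lam a b Z x : ℝ) : ℝ :=
  if 0 < x then Z * x ^ (-lam - 1) * Real.exp (-a * x - b * x⁻¹) else 0

section gigDensity

variable {lam b : ℝ}

theorem measurable_ofReal_gigDensity {a Z : ℝ} :
    Measurable fun x => ENNReal.ofReal (gigDensity lam a b Z x) :=
  (Measurable.ite measurableSet_Ioi (by fun_prop) measurable_const).ennreal_ofReal

theorem ofReal_gigDensity_mul_ofReal_gigDensity {a₁ a₂ Z₁ Z₂ x u : ℝ} (hx : 0 < x) (hu : 0 < u) :
    ENNReal.ofReal (gigDensity lam a₁ b Z₁ x) * ENNReal.ofReal (gigDensity lam a₂ b Z₂ u) =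
      ENNReal.ofReal Z₁ * ENNReal.ofReal Z₂ *
        ENNReal.ofReal ((x * u) ^ (-lam - 1) * Real.exp (-(a₁ * x + a₂ * u) - b * (x⁻¹ + u⁻¹))) := by
  have hkx : 0 ≤ x ^ (-lam - 1) * Real.exp (-a₁ * x - b * x⁻¹) := by positivity
  have hku : 0 ≤ u ^ (-lam - 1) * Real.exp (-a₂ * u - b * u⁻¹) := by positivity
  simp only [gigDensity, if_pos hx, if_pos hu]
  rw [mul_assoc Z₁, mul_assoc Z₂, ENNReal.ofReal_mul' hkx, ENNReal.ofReal_mul' hku,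
    mul_mul_mul_comm, ← ENNReal.ofReal_mul hkx, mul_mul_mul_comm, ← Real.mul_rpow hx.le hu.le,
    ← Real.exp_add]
  congr 4
  ring

theorem support_ofReal_gigDensity_mul_subset {a₁ a₂ Z₁ Z₂ : ℝ} :
    (fun p : ℝ × ℝ => ENNReal.ofReal (gigDensity lam a₁ b Z₁ p.1) *
      ENNReal.ofReal (gigDensity lam a₂ b Z₂ p.2)).support ⊆ Ioi 0 ×ˢ Ioi 0 := by
  intro p hp
  by_contra hS
  simp only [mem_prod, mem_Ioi, not_and_or, not_lt] at hS
  apply hp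
  rcases hS with h | h <;> simp [gigDensity, h.not_gt]

theorem gigDensity_mul_gigDensity_dKdV {α β Z₁ Z₂ : ℝ} (hα : 0 ≤ α) (hβ : 0 ≤ β)
    {p : ℝ × ℝ} (hp : p ∈ Ioi 0 ×ˢ Ioi 0) :
    ENNReal.ofReal (gigDensity lam (b * α) b Z₁ (dKdV α β p).1) *
        ENNReal.ofReal (gigDensity lam (b * β) b Z₂ (dKdV α β p).2) =
      ENNReal.ofReal (gigDensity lam (b * α) b Z₁ p.1) *
        ENNReal.ofReal (gigDensity lam (b * β) b Z₂ p.2) := by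
  obtain ⟨hy, hv⟩ := mapsTo_dKdV hα hβ hp
  have hA := (one_add_mul_mul_pos hα hp).ne'
  have hB := (one_add_mul_mul_pos hβ hp).ne'
  obtain ⟨x, u⟩ := p
  obtain ⟨hx, hu⟩ := hp
  have hexp : -(b * α * (dKdV α β (x, u)).1 + b * β * (dKdV α β (x, u)).2) -
      b * ((dKdV α β (x, u)).1⁻¹ + (dKdV α β (x, u)).2⁻¹) =
        -(b * α * x + b * β * u) - b * (x⁻¹ + u⁻¹) := by
    linear_combination (-b) * dKdV_conserved hx.ne' hu.ne' hA hB
  rw [ofReal_gigDensity_mul_ofReal_gigDensity hy hv, ofReal_gigDensity_mul_ofReal_gigDensity hx hu,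
    hexp, dKdV_fst_mul_snd hA hB]

end gigDensity

theorem dKdV_GIG_detailed_balance_general (α β lam c : ℝ)
    (hα : 0 < α) (hβ : 0 < β)
    (μ ν : Measure ℝ)
    (Z₁ Z₂ : ℝ)
    (hμ : μ = volume.withDensity fun x =>
      ENNReal.ofReal (if 0 < x then
        Z₁ * x ^ (-lam - 1) * Real.exp (-(c * α) * x - c * x⁻¹) else 0))
    (hν : ν = volume.withDensity fun x =>
      ENNReal.ofReal (if 0 < x then
        Z₂ * x ^ (-lam - 1) * Real.exp (-(c * β) * x - c * x⁻¹) else 0))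
    (F : ℝ × ℝ → ℝ × ℝ)
    (hF : ∀ x u : ℝ, F (x, u) =
      (u * (1 + β * x * u) / (1 + α * x * u),
       x * (1 + α * x * u) / (1 + β * x * u))) :
    Measure.map F (μ.prod ν) = μ.prod ν := by
  obtain rfl : F = dKdV α β := funext fun p => hF p.1 p.2
  obtain rfl : μ = volume.withDensity fun x => ENNReal.ofReal (gigDensity lam (c * α) c Z₁ x) := hμ
  obtain rfl : ν = volume.withDensity fun x => ENNReal.ofReal (gigDensity lam (c * β) c Z₂ x) := hν
  have hS : MeasurableSet (Ioi (0 : ℝ) ×ˢ Ioi (0 : ℝ)) := measurableSet_Ioi.prod measurableSet_Ioi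
  rw [prod_withDensity measurable_ofReal_gigDensity measurable_ofReal_gigDensity,
    ← Measure.volume_eq_prod, ← indicator_eq_self.2 support_ofReal_gigDensity_mul_subset,
    withDensity_indicator hS]
  refine Measure.map_withDensity_of_comp_ae_eq measurable_dKdV
    (map_dKdV_volume_restrict hα.le hβ.le)
    ((measurable_ofReal_gigDensity.comp measurable_fst).mul
      (measurable_ofReal_gigDensity.comp measurable_snd)) ?_
  exact (ae_restrict_iff' hS).2 (.of_forall fun p hp =>
    gigDensity_mul_gigDensity_dKdV hα.le hβ.le hp)

theorem dKdV_GIG_detailed_balance (α β lam c : ℝ)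
    (hα : 0 < α) (hβ : 0 < β) (hc : 0 < c)
    (μ ν : Measure ℝ) [IsProbabilityMeasure μ] [IsProbabilityMeasure ν]
    (Z₁ Z₂ : ℝ) (hZ₁ : 0 < Z₁) (hZ₂ : 0 < Z₂)
    (hμ : μ = volume.withDensity fun x =>
      ENNReal.ofReal (if 0 < x then
        Z₁ * x ^ (-lam - 1) * Real.exp (-(c * α) * x - c * x⁻¹) else 0))
    (hν : ν = volume.withDensity fun x =>
      ENNReal.ofReal (if 0 < x then
        Z₂ * x ^ (-lam - 1) * Real.exp (-(c * β) * x - c * x⁻¹) else 0))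
    (F : ℝ × ℝ → ℝ × ℝ)
    (hF : ∀ x u : ℝ, F (x, u) =
      (u * (1 + β * x * u) / (1 + α * x * u),
       x * (1 + α * x * u) / (1 + β * x * u))) :
    Measure.map F (μ.prod ν) = μ.prod ν :=
  dKdV_GIG_detailed_balance_general α β lam c hα hβ μ ν Z₁ Z₂ hμ hν F hF
end

section
/- Suppose β > 0 and (x_n)_{n∈ℤ} is a sequence of positive reals such that Σ_{n≤0} x_n^{−1} = ∞, and, with S_{−n} := Σ_{m=−n+1}^{0} (−log β − 2 log x_m), suppose lim_{n→−∞} (log x_n)/S_n = 0 and lim_{n→∞} S_{−n} = −∞. Then there is exactly one sequence (u_n)_{n∈ℤ} of positive reals satisfying u_n = x_n/(1 + β x_n u_{n−1}) for all n ∈ ℤ, given by the convergent infinite continued fraction u_n = β^{−1/2} · 1/((√β x_n)^{−1} + 1/((√β x_{n−1})^{−1} + ⋯)). -/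
open Filter

/-- Finite truncation of the continued fraction
`√β u_n = 1/((√β x_n)⁻¹ + 1/((√β x_{n-1})⁻¹ + ⋯))`, to depth `m`. -/
noncomputable def dKdVcf (β : ℝ) (x : ℤ → ℝ) : ℤ → ℕ → ℝ
  | n, 0 => Real.sqrt β * x n
  | n, m + 1 => 1 / ((Real.sqrt β * x n)⁻¹ + dKdVcf β x (n - 1) m)

lemma dKdVcf_zero (β : ℝ) (x : ℤ → ℝ) (n : ℤ) : dKdVcf β x n 0 = Real.sqrt β * x n := rfl

lemma dKdVcf_succ (β : ℝ) (x : ℤ → ℝ) (n : ℤ) (m : ℕ) :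
    dKdVcf β x n (m+1) = 1 / ((Real.sqrt β * x n)⁻¹ + dKdVcf β x (n-1) m) := rfl

noncomputable def dkdvK : ℕ → (ℕ → ℝ) → ℝ
  | 0, _ => 1
  | 1, a => a 0
  | (m+2), a => a 0 * dkdvK (m+1) (fun k => a (k+1)) + dkdvK m (fun k => a (k+2))

lemma dkdvK_zero (a : ℕ → ℝ) : dkdvK 0 a = 1 := rfl
lemma dkdvK_one (a : ℕ → ℝ) : dkdvK 1 a = a 0 := rfl
lemma dkdvK_top (m : ℕ) (a : ℕ → ℝ) :
    dkdvK (m+2) a = a 0 * dkdvK (m+1) (fun k => a (k+1)) + dkdvK m (fun k => a (k+2)) := rfl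

noncomputable def dkdvA (β : ℝ) (x : ℤ → ℝ) (n : ℤ) (k : ℕ) : ℝ := (Real.sqrt β * x (n - (k:ℤ)))⁻¹

lemma dkdvA_shift (β : ℝ) (x : ℤ → ℝ) (n : ℤ) :
    (fun k => dkdvA β x n (k+1)) = dkdvA β x (n-1) := by
  funext k
  simp only [dkdvA]
  congr 2
  push_cast
  ring

lemma dkdvA_shift2 (β : ℝ) (x : ℤ → ℝ) (n : ℤ) :
    (fun k => dkdvA β x n (k+2)) = dkdvA β x (n-1-1) := by
  funext k
  simp only [dkdvA]
  congr 2
  push_cast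
  ring

lemma dkdvA_succ (β : ℝ) (x : ℤ → ℝ) (n : ℤ) (k : ℕ) :
    dkdvA β x (n-1) k = dkdvA β x n (k+1) := by
  rw [← dkdvA_shift]

lemma dkdvK_bottom : ∀ (m : ℕ) (a : ℕ → ℝ),
    dkdvK (m+2) a = a (m+1) * dkdvK (m+1) a + dkdvK m a := by
  intro m
  induction m using Nat.strong_induction_on with
  | _ m ih =>
    intro a
    match m, ih with
    | 0, _ => simp [dkdvK]; ring
    | 1, ih =>
      rw [dkdvK_top, ih 0 (by omega)]
      simp [dkdvK]; ring
    | (m+2), ih =>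
      show dkdvK (m+4) a = a (m+3) * dkdvK (m+3) a + dkdvK (m+2) a
      have h4 : dkdvK (m+4) a
          = a 0 * dkdvK (m+3) (fun k => a (k+1)) + dkdvK (m+2) (fun k => a (k+2)) :=
        dkdvK_top (m+2) a
      have h3 : dkdvK (m+3) a
          = a 0 * dkdvK (m+2) (fun k => a (k+1)) + dkdvK (m+1) (fun k => a (k+2)) :=
        dkdvK_top (m+1) a
      have h2 : dkdvK (m+2) a
          = a 0 * dkdvK (m+1) (fun k => a (k+1)) + dkdvK m (fun k => a (k+2)) :=
        dkdvK_top m a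
      have i1 : dkdvK (m+3) (fun k => a (k+1))
          = a (m+3) * dkdvK (m+2) (fun k => a (k+1)) + dkdvK (m+1) (fun k => a (k+1)) :=
        ih (m+1) (by omega) (fun k => a (k+1))
      have i2 : dkdvK (m+2) (fun k => a (k+2))
          = a (m+3) * dkdvK (m+1) (fun k => a (k+2)) + dkdvK m (fun k => a (k+2)) :=
        ih m (by omega) (fun k => a (k+2))
      rw [h4, i1, i2, h3, h2]
      ring

lemma dkdvK_pos : ∀ (m : ℕ) (a : ℕ → ℝ), (∀ k, 0 < a k) → 0 < dkdvK m a := by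
  intro m
  induction m using Nat.strong_induction_on with
  | _ m ih =>
    intro a ha
    match m, ih with
    | 0, _ => norm_num [dkdvK]
    | 1, _ => simpa [dkdvK] using ha 0
    | (m+2), ih =>
      rw [dkdvK_top]
      have h1 := ih (m+1) (by omega) (fun k => a (k+1)) (fun k => ha (k+1))
      have h2 := ih m (by omega) (fun k => a (k+2)) (fun k => ha (k+2))
      have := ha 0
      positivity

lemma dkdvK_ge (a : ℕ → ℝ) (ha : ∀ k, 0 < a k) :
    ∀ m : ℕ, min 1 (a 0) ≤ dkdvK m a := by
  intro m
  induction m using Nat.strong_induction_on with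
  | _ m ih =>
    match m, ih with
    | 0, _ => simp [dkdvK]
    | 1, _ => simp [dkdvK]
    | (m+2), ih =>
      rw [dkdvK_bottom]
      have h1 := dkdvK_pos (m+1) a ha
      have h2 := ih m (by omega)
      have := ha (m+1)
      nlinarith

lemma dkdvA_pos {β : ℝ} {x : ℤ → ℝ} (hβ : 0 < β) (hx : ∀ n, 0 < x n) (n : ℤ) (k : ℕ) :
    0 < dkdvA β x n k := by
  have := Real.sqrt_pos.2 hβ
  have := hx (n - (k:ℤ))
  simp only [dkdvA]
  positivity

section
variable {β : ℝ} {x : ℤ → ℝ}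

lemma dkdv_ypos (hβ : 0 < β) (hx : ∀ n, 0 < x n) (n : ℤ) : 0 < Real.sqrt β * x n :=
  mul_pos (Real.sqrt_pos.2 hβ) (hx n)

lemma dkdv_pos (hβ : 0 < β) (hx : ∀ n, 0 < x n) :
    ∀ (m : ℕ) (n : ℤ), 0 < dKdVcf β x n m := by
  intro m
  induction m with
  | zero => exact fun n => dkdv_ypos hβ hx n
  | succ m ih =>
    intro n
    rw [dKdVcf_succ]
    have h1 : 0 < (Real.sqrt β * x n)⁻¹ := inv_pos.2 (dkdv_ypos hβ hx n)
    have h2 := ih (n-1)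
    positivity

lemma dkdv_le (hβ : 0 < β) (hx : ∀ n, 0 < x n) (m : ℕ) (n : ℤ) :
    dKdVcf β x n m ≤ Real.sqrt β * x n := by
  cases m with
  | zero => exact le_refl _
  | succ m =>
    rw [dKdVcf_succ]
    have hy := dkdv_ypos hβ hx n
    have h1 : 0 < (Real.sqrt β * x n)⁻¹ := inv_pos.2 hy
    have h2 := dkdv_pos hβ hx m (n-1)
    calc 1 / ((Real.sqrt β * x n)⁻¹ + dKdVcf β x (n-1) m)
        ≤ 1 / (Real.sqrt β * x n)⁻¹ :=
          one_div_le_one_div_of_le h1 (le_add_of_nonneg_right h2.le)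
      _ = Real.sqrt β * x n := by rw [one_div, inv_inv]

lemma dkdv_anti (hβ : 0 < β) (hx : ∀ n, 0 < x n) (n : ℤ) {w w' : ℝ}
    (h0 : 0 ≤ w) (h : w ≤ w') :
    1 / ((Real.sqrt β * x n)⁻¹ + w') ≤ 1 / ((Real.sqrt β * x n)⁻¹ + w) := by
  have h1 : 0 < (Real.sqrt β * x n)⁻¹ := inv_pos.2 (dkdv_ypos hβ hx n)
  exact one_div_le_one_div_of_le (by linarith) (by linarith)

end

section
variable {β : ℝ} {x : ℤ → ℝ}

lemma dkdv_nest (hβ : 0 < β) (hx : ∀ n, 0 < x n) :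
    ∀ (m : ℕ) (n : ℤ),
      min (dKdVcf β x n m) (dKdVcf β x n (m+1)) ≤ dKdVcf β x n (m+2) ∧
      dKdVcf β x n (m+2) ≤ max (dKdVcf β x n m) (dKdVcf β x n (m+1)) := by
  intro m
  induction m with
  | zero =>
    intro n
    have h01 : dKdVcf β x n 2 ≤ dKdVcf β x n 0 := dkdv_le hβ hx 2 n
    have h12 : dKdVcf β x n 1 ≤ dKdVcf β x n 2 := by
      rw [dKdVcf_succ β x n 0, dKdVcf_succ β x n 1]
      exact dkdv_anti hβ hx n (dkdv_pos hβ hx 1 (n-1)).le (dkdv_le hβ hx 1 (n-1))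
    exact ⟨le_trans (min_le_right _ _) h12, le_trans h01 (le_max_left _ _)⟩
  | succ m ih =>
    intro n
    obtain ⟨hlo, hhi⟩ := ih (n-1)
    rcases le_total (dKdVcf β x (n-1) m) (dKdVcf β x (n-1) (m+1)) with hc | hc
    · rw [min_eq_left hc] at hlo
      rw [max_eq_right hc] at hhi
      have a1 : dKdVcf β x n (m+3) ≤ dKdVcf β x n (m+1) := by
        rw [dKdVcf_succ β x n (m+2), dKdVcf_succ β x n m]
        exact dkdv_anti hβ hx n (dkdv_pos hβ hx m (n-1)).le hlo
      have a2 : dKdVcf β x n (m+2) ≤ dKdVcf β x n (m+3) := by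
        rw [dKdVcf_succ β x n (m+1), dKdVcf_succ β x n (m+2)]
        exact dkdv_anti hβ hx n (dkdv_pos hβ hx (m+2) (n-1)).le hhi
      exact ⟨le_trans (min_le_right _ _) a2, le_trans a1 (le_max_left _ _)⟩
    · rw [min_eq_right hc] at hlo
      rw [max_eq_left hc] at hhi
      have a1 : dKdVcf β x n (m+1) ≤ dKdVcf β x n (m+3) := by
        rw [dKdVcf_succ β x n (m+2), dKdVcf_succ β x n m]
        exact dkdv_anti hβ hx n (dkdv_pos hβ hx (m+2) (n-1)).le hhi
      have a2 : dKdVcf β x n (m+3) ≤ dKdVcf β x n (m+2) := by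
        rw [dKdVcf_succ β x n (m+1), dKdVcf_succ β x n (m+2)]
        exact dkdv_anti hβ hx n (dkdv_pos hβ hx (m+1) (n-1)).le hlo
      exact ⟨le_trans (min_le_left _ _) a1, le_trans a2 (le_max_right _ _)⟩

lemma dkdv_sandwich (hβ : 0 < β) (hx : ∀ n, 0 < x n) {w : ℤ → ℝ}
    (hw : ∀ n, 0 < w n)
    (hrec : ∀ n : ℤ, w n = 1 / ((Real.sqrt β * x n)⁻¹ + w (n-1))) :
    ∀ (m : ℕ) (n : ℤ),
      min (dKdVcf β x n m) (dKdVcf β x n (m+1)) ≤ w n ∧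
      w n ≤ max (dKdVcf β x n m) (dKdVcf β x n (m+1)) := by
  have hwle : ∀ n : ℤ, w n ≤ Real.sqrt β * x n := by
    intro n
    rw [hrec n]
    have h1 : 0 < (Real.sqrt β * x n)⁻¹ := inv_pos.2 (dkdv_ypos hβ hx n)
    calc 1 / ((Real.sqrt β * x n)⁻¹ + w (n-1))
        ≤ 1 / (Real.sqrt β * x n)⁻¹ :=
          one_div_le_one_div_of_le h1 (le_add_of_nonneg_right (hw (n-1)).le)
      _ = Real.sqrt β * x n := by rw [one_div, inv_inv]
  intro m
  induction m with
  | zero =>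
    intro n
    have h0 : w n ≤ dKdVcf β x n 0 := hwle n
    have h1 : dKdVcf β x n 1 ≤ w n := by
      rw [dKdVcf_succ β x n 0, hrec n]
      exact dkdv_anti hβ hx n (hw (n-1)).le (hwle (n-1))
    exact ⟨le_trans (min_le_right _ _) h1, le_trans h0 (le_max_left _ _)⟩
  | succ m ih =>
    intro n
    obtain ⟨hlo, hhi⟩ := ih (n-1)
    rcases le_total (dKdVcf β x (n-1) m) (dKdVcf β x (n-1) (m+1)) with hc | hc
    · rw [min_eq_left hc] at hlo
      rw [max_eq_right hc] at hhi
      have a1 : w n ≤ dKdVcf β x n (m+1) := by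
        rw [dKdVcf_succ β x n m, hrec n]
        exact dkdv_anti hβ hx n (dkdv_pos hβ hx m (n-1)).le hlo
      have a2 : dKdVcf β x n (m+2) ≤ w n := by
        rw [dKdVcf_succ β x n (m+1), hrec n]
        exact dkdv_anti hβ hx n (hw (n-1)).le hhi
      exact ⟨le_trans (min_le_right _ _) a2, le_trans a1 (le_max_left _ _)⟩
    · rw [min_eq_right hc] at hlo
      rw [max_eq_left hc] at hhi
      have a1 : dKdVcf β x n (m+1) ≤ w n := by
        rw [dKdVcf_succ β x n m, hrec n]
        exact dkdv_anti hβ hx n (hw (n-1)).le hhi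
      have a2 : w n ≤ dKdVcf β x n (m+2) := by
        rw [dKdVcf_succ β x n (m+1), hrec n]
        exact dkdv_anti hβ hx n (dkdv_pos hβ hx (m+1) (n-1)).le hlo
      exact ⟨le_trans (min_le_left _ _) a1, le_trans a2 (le_max_right _ _)⟩

end

section
variable {β : ℝ} {x : ℤ → ℝ}

lemma dkdv_Imono (hβ : 0 < β) (hx : ∀ n, 0 < x n) (n : ℤ) (m : ℕ) :
    ∀ k : ℕ,
      min (dKdVcf β x n m) (dKdVcf β x n (m+1)) ≤
        min (dKdVcf β x n (m+k)) (dKdVcf β x n (m+k+1)) ∧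
      max (dKdVcf β x n (m+k)) (dKdVcf β x n (m+k+1)) ≤
        max (dKdVcf β x n m) (dKdVcf β x n (m+1)) := by
  intro k
  induction k with
  | zero => simp
  | succ k ih =>
    obtain ⟨h1, h2⟩ := ih
    obtain ⟨h3, h4⟩ := dkdv_nest hβ hx (m+k) n
    have e : m + (k+1) = (m+k) + 1 := by ring
    rw [e, show (m+k)+1+1 = (m+k)+2 from rfl]
    constructor
    · exact le_trans h1 (le_min (min_le_right _ _) h3)
    · exact le_trans (max_le (le_max_right _ _) h4) h2

lemma dkdv_mem (hβ : 0 < β) (hx : ∀ n, 0 < x n) (n : ℤ) {m j : ℕ} (h : m ≤ j) :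
    min (dKdVcf β x n m) (dKdVcf β x n (m+1)) ≤ dKdVcf β x n j ∧
    dKdVcf β x n j ≤ max (dKdVcf β x n m) (dKdVcf β x n (m+1)) := by
  obtain ⟨k, rfl⟩ := Nat.exists_eq_add_of_le h
  obtain ⟨h1, h2⟩ := dkdv_Imono hβ hx n m k
  exact ⟨le_trans h1 (min_le_left _ _), le_trans (le_max_left _ _) h2⟩

end

section
variable {β : ℝ} {x : ℤ → ℝ}

lemma dkdv_cf_eq (hβ : 0 < β) (hx : ∀ n, 0 < x n) :
    ∀ (m : ℕ) (n : ℤ),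
      dKdVcf β x n m = dkdvK m (dkdvA β x (n-1)) / dkdvK (m+1) (dkdvA β x n) := by
  intro m
  induction m with
  | zero =>
    intro n
    rw [dKdVcf_zero, dkdvK_zero, dkdvK_one]
    simp [dkdvA]
  | succ m ih =>
    intro n
    have hK1 : 0 < dkdvK (m+1) (dkdvA β x (n-1)) :=
      dkdvK_pos (m+1) _ (dkdvA_pos hβ hx (n-1))
    have hK2 : 0 < dkdvK (m+2) (dkdvA β x n) :=
      dkdvK_pos (m+2) _ (dkdvA_pos hβ hx n)
    have hprev := ih (n-1)
    have hcprev := dkdv_pos hβ hx m (n-1)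
    have hexp : dkdvK (m+2) (dkdvA β x n)
        = ((Real.sqrt β * x n)⁻¹ + dKdVcf β x (n-1) m) * dkdvK (m+1) (dkdvA β x (n-1)) := by
      rw [dkdvK_top, dkdvA_shift, dkdvA_shift2]
      have hKm : 0 < dkdvK (m+1) (dkdvA β x (n-1-1)) :=
        dkdvK_pos (m+1) _ (dkdvA_pos hβ hx (n-1-1))
      have h0 : dkdvA β x n 0 = (Real.sqrt β * x n)⁻¹ := by simp [dkdvA]
      rw [h0, hprev]
      field_simp
    rw [dKdVcf_succ, hexp]
    have hd : 0 < (Real.sqrt β * x n)⁻¹ + dKdVcf β x (n-1) m := by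
      have := inv_pos.2 (dkdv_ypos hβ hx n); linarith
    rw [mul_comm ((Real.sqrt β * x n)⁻¹ + dKdVcf β x (n-1) m)
        (dkdvK (m+1) (dkdvA β x (n-1))), ← div_div, div_self hK1.ne']

lemma dkdv_det (hβ : 0 < β) (hx : ∀ n, 0 < x n) :
    ∀ (m : ℕ) (n : ℤ),
      dkdvK (m+1) (dkdvA β x (n-1)) * dkdvK (m+1) (dkdvA β x n) -
        dkdvK m (dkdvA β x (n-1)) * dkdvK (m+2) (dkdvA β x n) = (-1 : ℝ)^(m+1) := by
  intro m
  induction m with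
  | zero =>
    intro n
    have h2 : dkdvK 2 (dkdvA β x n)
        = dkdvA β x n 0 * dkdvA β x (n-1) 0 + 1 := by
      rw [dkdvK_top, dkdvA_shift, dkdvK_one, dkdvK_zero]
    rw [dkdvK_one, dkdvK_one, dkdvK_zero, h2]
    ring
  | succ m ih =>
    intro n
    have b1 : dkdvK (m+2) (dkdvA β x (n-1))
        = dkdvA β x n (m+2) * dkdvK (m+1) (dkdvA β x (n-1)) + dkdvK m (dkdvA β x (n-1)) := by
      rw [dkdvK_bottom, dkdvA_succ]
    have b2 : dkdvK (m+3) (dkdvA β x n)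
        = dkdvA β x n (m+2) * dkdvK (m+2) (dkdvA β x n) + dkdvK (m+1) (dkdvA β x n) :=
      dkdvK_bottom (m+1) _
    rw [show m+1+1 = m+2 from rfl, show m+1+2 = m+3 from rfl, b1, b2]
    linear_combination (-1 : ℝ) * ih n

lemma dkdv_diff (hβ : 0 < β) (hx : ∀ n, 0 < x n) (m : ℕ) (n : ℤ) :
    |dKdVcf β x n (m+1) - dKdVcf β x n m| =
      1 / (dkdvK (m+1) (dkdvA β x n) * dkdvK (m+2) (dkdvA β x n)) := by
  have hK1 : 0 < dkdvK (m+1) (dkdvA β x n) := dkdvK_pos (m+1) _ (dkdvA_pos hβ hx n)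
  have hK2 : 0 < dkdvK (m+2) (dkdvA β x n) := dkdvK_pos (m+2) _ (dkdvA_pos hβ hx n)
  have e : dKdVcf β x n (m+1) - dKdVcf β x n m =
      (-1 : ℝ)^(m+1) / (dkdvK (m+2) (dkdvA β x n) * dkdvK (m+1) (dkdvA β x n)) := by
    rw [dkdv_cf_eq hβ hx (m+1) n, dkdv_cf_eq hβ hx m n, div_sub_div _ _ hK2.ne' hK1.ne']
    rw [show dkdvK (m+1) (dkdvA β x (n-1)) * dkdvK (m+1) (dkdvA β x n) -
        dkdvK (m+2) (dkdvA β x n) * dkdvK m (dkdvA β x (n-1)) =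
        dkdvK (m+1) (dkdvA β x (n-1)) * dkdvK (m+1) (dkdvA β x n) -
        dkdvK m (dkdvA β x (n-1)) * dkdvK (m+2) (dkdvA β x n) from by ring,
      dkdv_det hβ hx m n]
  rw [e, abs_div, abs_pow, abs_neg, abs_one, one_pow, abs_of_pos (by positivity), mul_comm]

end

section
variable {β : ℝ} {x : ℤ → ℝ}

lemma dkdv_shift_sum (hx : ∀ n, 0 < x n)
    (hdiv : Tendsto (fun N : ℕ => ∑ k ∈ Finset.range N, (x (-(k:ℤ)))⁻¹) atTop atTop) (c : ℤ) :
    Tendsto (fun N : ℕ => ∑ k ∈ Finset.range N, (x (c - (k:ℤ)))⁻¹) atTop atTop := by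
  rw [tendsto_atTop_atTop] at hdiv ⊢
  intro b
  rcases le_or_gt 0 c with hc | hc
  · obtain ⟨N₁, hN₁⟩ := hdiv b
    refine ⟨N₁ + c.toNat, fun a ha => ?_⟩
    have htc : (c.toNat : ℤ) = c := Int.toNat_of_nonneg hc
    have key : ∑ k ∈ Finset.Ico c.toNat a, (x (c - (k:ℤ)))⁻¹
        = ∑ i ∈ Finset.range (a - c.toNat), (x (-(i:ℤ)))⁻¹ := by
      rw [Finset.sum_Ico_eq_sum_range]
      refine Finset.sum_congr rfl fun i _ => ?_
      congr 2
      push_cast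
      omega
    calc b ≤ ∑ i ∈ Finset.range (a - c.toNat), (x (-(i:ℤ)))⁻¹ := hN₁ _ (by omega)
      _ = ∑ k ∈ Finset.Ico c.toNat a, (x (c - (k:ℤ)))⁻¹ := key.symm
      _ ≤ ∑ k ∈ Finset.range a, (x (c - (k:ℤ)))⁻¹ := by
          refine Finset.sum_le_sum_of_subset_of_nonneg ?_ fun i _ _ => (inv_pos.2 (hx _)).le
          rw [Finset.range_eq_Ico]
          exact Finset.Ico_subset_Ico (Nat.zero_le _) le_rfl
  · set d := (-c).toNat with hd
    have hdc : (d : ℤ) = -c := Int.toNat_of_nonneg (by omega)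
    obtain ⟨N₁, hN₁⟩ := hdiv (b + ∑ k ∈ Finset.range d, (x (-(k:ℤ)))⁻¹)
    refine ⟨N₁, fun a ha => ?_⟩
    have key : ∑ k ∈ Finset.range (d + a), (x (-(k:ℤ)))⁻¹
        = ∑ k ∈ Finset.range d, (x (-(k:ℤ)))⁻¹ + ∑ i ∈ Finset.range a, (x (c - (i:ℤ)))⁻¹ := by
      rw [Finset.range_eq_Ico,
        ← Finset.sum_Ico_consecutive _ (Nat.zero_le d) (Nat.le_add_right d a)]
      simp only [Finset.range_eq_Ico]
      congr 1
      rw [Finset.sum_Ico_eq_sum_range, show d + a - d = a by omega, ← Finset.range_eq_Ico]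
      refine Finset.sum_congr rfl fun i _ => ?_
      congr 2
      push_cast
      omega
    have hb : b + ∑ k ∈ Finset.range d, (x (-(k:ℤ)))⁻¹
        ≤ ∑ k ∈ Finset.range (d + a), (x (-(k:ℤ)))⁻¹ := hN₁ _ (by omega)
    rw [key] at hb
    linarith

lemma dkdv_Rtend (hβ : 0 < β) (hx : ∀ n, 0 < x n)
    (hdiv : Tendsto (fun N : ℕ => ∑ k ∈ Finset.range N, (x (-(k:ℤ)))⁻¹) atTop atTop) (n : ℤ) :
    Tendsto (fun m : ℕ => dkdvK (m+1) (dkdvA β x n) * dkdvK (m+2) (dkdvA β x n))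
      atTop atTop := by
  have ha : ∀ k, 0 < dkdvA β x n k := dkdvA_pos hβ hx n
  set a := dkdvA β x n with hadef
  set ε := min 1 (a 0) with hε
  have hε0 : 0 < ε := lt_min one_pos (ha 0)
  have hsum : Tendsto (fun m : ℕ => ∑ j ∈ Finset.range m, a (j+2)) atTop atTop := by
    have h1 : ∀ j : ℕ, a (j+2) = (Real.sqrt β)⁻¹ * (x (n - 2 - (j:ℤ)))⁻¹ := by
      intro j
      rw [hadef]
      simp only [dkdvA]
      rw [mul_inv]
      congr 2
      push_cast
      ring
    have heq : (fun m : ℕ => ∑ j ∈ Finset.range m, a (j+2))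
        = fun m : ℕ => (Real.sqrt β)⁻¹ * ∑ j ∈ Finset.range m, (x (n - 2 - (j:ℤ)))⁻¹ := by
      funext m
      rw [Finset.mul_sum]
      exact Finset.sum_congr rfl fun j _ => h1 j
    rw [heq]
    exact (dkdv_shift_sum hx hdiv (n-2)).const_mul_atTop (inv_pos.2 (Real.sqrt_pos.2 hβ))
  have hlb : ∀ m : ℕ, dkdvK 1 a * dkdvK 2 a + ε^2 * ∑ j ∈ Finset.range m, a (j+2)
      ≤ dkdvK (m+1) a * dkdvK (m+2) a := by
    intro m
    induction m with
    | zero => simp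
    | succ m ih =>
      have hrec : dkdvK (m+3) a = a (m+2) * dkdvK (m+2) a + dkdvK (m+1) a :=
        dkdvK_bottom (m+1) a
      have h1 : ε ≤ dkdvK (m+2) a := dkdvK_ge a ha (m+2)
      have h3 : 0 < dkdvK (m+2) a := dkdvK_pos _ _ ha
      have h4 : ε^2 ≤ dkdvK (m+2) a ^ 2 := by nlinarith
      have h5 : a (m+2) * ε^2 ≤ a (m+2) * dkdvK (m+2) a ^ 2 :=
        mul_le_mul_of_nonneg_left h4 (ha (m+2)).le
      have h6 : dkdvK (m+2) a * dkdvK (m+3) a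
          = dkdvK (m+1) a * dkdvK (m+2) a + a (m+2) * dkdvK (m+2) a ^ 2 := by
        rw [hrec]; ring
      rw [Finset.sum_range_succ]
      rw [show m+1+1 = m+2 from rfl, show m+1+2 = m+3 from rfl]
      linarith
  refine tendsto_atTop_mono hlb ?_
  exact tendsto_atTop_add_const_left _ _ (hsum.const_mul_atTop (by positivity))

lemma dkdv_diff0 (hβ : 0 < β) (hx : ∀ n, 0 < x n)
    (hdiv : Tendsto (fun N : ℕ => ∑ k ∈ Finset.range N, (x (-(k:ℤ)))⁻¹) atTop atTop) (n : ℤ) :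
    Tendsto (fun m : ℕ => |dKdVcf β x n (m+1) - dKdVcf β x n m|) atTop (nhds 0) := by
  have h := (dkdv_Rtend hβ hx hdiv n).inv_tendsto_atTop
  refine h.congr fun m => ?_
  rw [Pi.inv_apply, dkdv_diff hβ hx m n, one_div]

end

theorem dKdV_continued_fraction (β : ℝ) (hβ : 0 < β)
    (x : ℤ → ℝ) (hx : ∀ n : ℤ, 0 < x n)
    (hdiv : Tendsto (fun N : ℕ => ∑ k ∈ Finset.range N, (x (-(k : ℤ)))⁻¹) atTop atTop)
    (hS : Tendsto
      (fun n : ℕ => -∑ k ∈ Finset.range n, (-Real.log β - 2 * Real.log (x (-(k : ℤ)))))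
      atTop atTop)
    (hlog : Tendsto
      (fun n : ℕ => Real.log (x (-(n : ℤ))) /
        (∑ k ∈ Finset.range n, (-Real.log β - 2 * Real.log (x (-(k : ℤ))))))
      atTop (nhds 0)) :
    (∃! u : ℤ → ℝ, (∀ n : ℤ, 0 < u n) ∧
        ∀ n : ℤ, u n = x n / (1 + β * x n * u (n - 1))) ∧
      ∀ u : ℤ → ℝ,
        ((∀ n : ℤ, 0 < u n) ∧ ∀ n : ℤ, u n = x n / (1 + β * x n * u (n - 1))) →
        ∀ n : ℤ, Tendsto (dKdVcf β x n) atTop (nhds (Real.sqrt β * u n)) := by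
  have hs : 0 < Real.sqrt β := Real.sqrt_pos.2 hβ
  have hsq : Real.sqrt β * Real.sqrt β = β := Real.mul_self_sqrt hβ.le
  have hy : ∀ n : ℤ, 0 < Real.sqrt β * x n := dkdv_ypos hβ hx
  -- Cauchy property of the truncations
  have hcauchy : ∀ n : ℤ, CauchySeq (dKdVcf β x n) := by
    intro n
    apply cauchySeq_of_le_tendsto_0 (fun N => |dKdVcf β x n (N+1) - dKdVcf β x n N|)
      ?_ (dkdv_diff0 hβ hx hdiv n)
    intro j j' N hj hj'
    obtain ⟨m1, m2⟩ := dkdv_mem hβ hx n hj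
    obtain ⟨m3, m4⟩ := dkdv_mem hβ hx n hj'
    have e1 : max (dKdVcf β x n N) (dKdVcf β x n (N+1))
        - min (dKdVcf β x n N) (dKdVcf β x n (N+1))
        = |dKdVcf β x n (N+1) - dKdVcf β x n N| := max_sub_min_eq_abs _ _
    rw [Real.dist_eq, abs_sub_le_iff]
    constructor <;> linarith
  choose v hv using fun n : ℤ => cauchySeq_tendsto_of_complete (hcauchy n)
  -- limit is positive and satisfies the recursion
  have hvlb : ∀ n : ℤ, dKdVcf β x n 1 ≤ v n := by
    intro n
    apply ge_of_tendsto (hv n)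
    refine Eventually.of_forall fun j => ?_
    have h := (dkdv_mem hβ hx n (Nat.zero_le j)).1
    have h10 : dKdVcf β x n 1 ≤ dKdVcf β x n 0 := dkdv_le hβ hx 1 n
    rwa [min_eq_right h10] at h
  have hvpos : ∀ n : ℤ, 0 < v n := fun n => lt_of_lt_of_le (dkdv_pos hβ hx 1 n) (hvlb n)
  have hvrec : ∀ n : ℤ, v n = 1 / ((Real.sqrt β * x n)⁻¹ + v (n-1)) := by
    intro n
    have h1 : Tendsto (fun m : ℕ => dKdVcf β x n (m+1)) atTop (nhds (v n)) :=
      (hv n).comp (tendsto_add_atTop_nat 1)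
    have hd : (Real.sqrt β * x n)⁻¹ + v (n-1) ≠ 0 :=
      (add_pos (inv_pos.2 (hy n)) (hvpos (n-1))).ne'
    have h2 : Tendsto (fun m : ℕ => 1 / ((Real.sqrt β * x n)⁻¹ + dKdVcf β x (n-1) m))
        atTop (nhds (1 / ((Real.sqrt β * x n)⁻¹ + v (n-1)))) := by
      simp only [one_div]
      exact (tendsto_const_nhds.add (hv (n-1))).inv₀ hd
    exact tendsto_nhds_unique (h1.congr fun m => dKdVcf_succ β x n m) h2
  -- uniqueness of positive solutions of the transformed recursion
  have huniq : ∀ w : ℤ → ℝ, (∀ n, 0 < w n) →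
      (∀ n : ℤ, w n = 1 / ((Real.sqrt β * x n)⁻¹ + w (n-1))) → ∀ n, w n = v n := by
    intro w hw hrec n
    have hle : ∀ m : ℕ, |w n - v n| ≤ |dKdVcf β x n (m+1) - dKdVcf β x n m| := by
      intro m
      obtain ⟨a1, a2⟩ := dkdv_sandwich hβ hx hw hrec m n
      obtain ⟨b1, b2⟩ := dkdv_sandwich hβ hx hvpos hvrec m n
      have e1 : max (dKdVcf β x n m) (dKdVcf β x n (m+1))
          - min (dKdVcf β x n m) (dKdVcf β x n (m+1))
          = |dKdVcf β x n (m+1) - dKdVcf β x n m| := max_sub_min_eq_abs _ _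
      rw [abs_sub_le_iff]
      constructor <;> linarith
    have h0 : |w n - v n| ≤ 0 :=
      ge_of_tendsto (dkdv_diff0 hβ hx hdiv n) (Eventually.of_forall hle)
    have := abs_nonpos_iff.1 h0
    linarith [sub_eq_zero.1 this]
  -- key algebraic identity
  have halg : ∀ (n : ℤ) (b : ℝ), 0 ≤ b →
      (Real.sqrt β)⁻¹ * (1 / ((Real.sqrt β * x n)⁻¹ + Real.sqrt β * b))
        = x n / (1 + β * x n * b) := by
    intro n b hb
    have hE : 0 < 1 + β * x n * b := by nlinarith [mul_pos hβ (hx n)]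
    have hD : 0 < (Real.sqrt β * x n)⁻¹ + Real.sqrt β * b :=
      add_pos_of_pos_of_nonneg (inv_pos.2 (hy n)) (by positivity)
    have hkey : (Real.sqrt β * x n)⁻¹ + Real.sqrt β * b
        = (1 + β * x n * b) / (Real.sqrt β * x n) := by
      rw [eq_div_iff (hy n).ne']
      have h1 : (Real.sqrt β * x n)⁻¹ * (Real.sqrt β * x n) = 1 := inv_mul_cancel₀ (hy n).ne'
      linear_combination h1 + (x n * b) * hsq
    rw [hkey, one_div_div, ← mul_div_assoc, ← mul_assoc, inv_mul_cancel₀ hs.ne', one_mul]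
  -- transformed recursion for any solution of the original one
  have htrans : ∀ u : ℤ → ℝ, (∀ n, 0 < u n) →
      (∀ n : ℤ, u n = x n / (1 + β * x n * u (n-1))) →
      ∀ n : ℤ, Real.sqrt β * u n = 1 / ((Real.sqrt β * x n)⁻¹ + Real.sqrt β * u (n-1)) := by
    intro u hu hrec n
    rw [hrec n, ← halg n (u (n-1)) (hu (n-1)).le, ← mul_assoc,
      mul_inv_cancel₀ hs.ne', one_mul]
  -- the canonical solution
  set u : ℤ → ℝ := fun n => (Real.sqrt β)⁻¹ * v n with hu
  have hsu : ∀ n, Real.sqrt β * u n = v n := by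
    intro n
    rw [hu]
    field_simp
  have hupos : ∀ n, 0 < u n := fun n => mul_pos (inv_pos.2 hs) (hvpos n)
  have hurec : ∀ n : ℤ, u n = x n / (1 + β * x n * u (n-1)) := by
    intro n
    have h1 : u n = (Real.sqrt β)⁻¹ * v n := by rw [hu]
    rw [h1, hvrec n, ← hsu (n-1)]
    exact halg n (u (n-1)) (hupos (n-1)).le
  -- wrap up
  constructor
  · refine ⟨u, ⟨hupos, hurec⟩, ?_⟩
    rintro u' ⟨h1, h2⟩
    funext n
    have hw : Real.sqrt β * u' n = v n :=
      huniq (fun k => Real.sqrt β * u' k) (fun k => mul_pos hs (h1 k))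
        (fun k => htrans u' h1 h2 k) n
    have h3 : u' n = (Real.sqrt β)⁻¹ * (Real.sqrt β * u' n) := by field_simp
    rw [h3, hw, hu]
  · rintro u' ⟨h1, h2⟩ n
    have hw : Real.sqrt β * u' n = v n :=
      huniq (fun k => Real.sqrt β * u' k) (fun k => mul_pos hs (h1 k))
        (fun k => htrans u' h1 h2 k) n
    rw [hw]
    exact hv n
end

section
/- (Uniqueness part of dKdV continued fraction) With β > 0, suppose (u_n) and (ũ_n) are two positive sequences both satisfying u_n = x_n/(1 + β x_n u_{n−1}) for all n ∈ ℤ. Then |u_n − ũ_n| ≤ exp(Σ_{k=m}^{n} (log β + 2 log x_k) + log x_{m−1}) for all m ≤ n; hence if for each n the right-hand side tends to 0 as m → −∞, the two sequences coincide. -/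
/-!
Subtracting the two recursions gives
`u n - v n = β x_n² (v (n-1) - u (n-1)) / ((1 + β x_n u (n-1)) (1 + β x_n v (n-1)))`,
and both denominators are at least `1`, so the map `u (n-1) ↦ u n` contracts differences by the
factor `β x_n²`. Since every positive solution satisfies `0 < u k ≤ x k`, iterating from `m` to `n`
gives `|u n - v n| ≤ (∏ k ∈ [m, n], β x_k²) · x (m-1)`, which is the stated exponential.
-/

open Filter

lemma div_one_add_mul_le_self {β y a : ℝ} (hβ : 0 ≤ β) (hy : 0 ≤ y) (ha : 0 ≤ a) :
    y / (1 + β * y * a) ≤ y :=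
  div_le_self hy (le_add_of_nonneg_right (by positivity))

lemma abs_div_one_add_sub_div_one_add_le {β y a b : ℝ} (hβ : 0 ≤ β) (hy : 0 ≤ y)
    (ha : 0 ≤ a) (hb : 0 ≤ b) :
    |y / (1 + β * y * a) - y / (1 + β * y * b)| ≤ β * y ^ 2 * |a - b| := by
  have hda : 1 ≤ 1 + β * y * a := le_add_of_nonneg_right (by positivity)
  have hdb : 1 ≤ 1 + β * y * b := le_add_of_nonneg_right (by positivity)
  have hd : 1 ≤ (1 + β * y * a) * (1 + β * y * b) := one_le_mul_of_one_le_of_one_le hda hdb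
  have hdiff : y / (1 + β * y * a) - y / (1 + β * y * b) =
      β * y ^ 2 * (b - a) / ((1 + β * y * a) * (1 + β * y * b)) := by
    rw [div_sub_div _ _ (one_pos.trans_le hda).ne' (one_pos.trans_le hdb).ne']
    ring
  calc |y / (1 + β * y * a) - y / (1 + β * y * b)|
      = |β * y ^ 2 * (b - a)| / ((1 + β * y * a) * (1 + β * y * b)) := by
        rw [hdiff, abs_div, abs_of_pos (one_pos.trans_le hd)]
    _ ≤ |β * y ^ 2 * (b - a)| := div_le_self (abs_nonneg _) hd
    _ = β * y ^ 2 * |a - b| := by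
        rw [abs_mul, abs_of_nonneg (by positivity), abs_sub_comm]

lemma le_prod_Icc_mul_of_le_mul_pred {d c : ℤ → ℝ} (hc : ∀ n, 0 ≤ c n)
    (hd : ∀ n, d n ≤ c n * d (n - 1)) {m n : ℤ} (hmn : m ≤ n) :
    d n ≤ (∏ k ∈ Finset.Icc m n, c k) * d (m - 1) := by
  induction n, hmn using Int.leInduction with
  | base => simpa using hd m
  | succ n hmn ih =>
    rw [← Finset.insert_Icc_right_eq_Icc_add_one (by omega),
      Finset.prod_insert (by simp), mul_assoc]
    calc d (n + 1) ≤ c (n + 1) * d n := by simpa using hd (n + 1)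
      _ ≤ c (n + 1) * ((∏ k ∈ Finset.Icc m n, c k) * d (m - 1)) :=
        mul_le_mul_of_nonneg_left ih (hc _)

lemma exp_sum_log_add_log_eq_prod_mul {β : ℝ} (hβ : 0 < β) {x : ℤ → ℝ} (hx : ∀ n, 0 < x n)
    (m n : ℤ) :
    Real.exp ((∑ k ∈ Finset.Icc m n, (Real.log β + 2 * Real.log (x k))) + Real.log (x (m - 1))) =
      (∏ k ∈ Finset.Icc m n, β * x k ^ 2) * x (m - 1) := by
  rw [Real.exp_add, Real.exp_sum, Real.exp_log (hx _)]
  congr 1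
  refine Finset.prod_congr rfl fun k _ => ?_
  rw [Real.exp_add, two_mul, Real.exp_add, Real.exp_log hβ, Real.exp_log (hx k), sq]

theorem dKdV_uniqueness_bound (β : ℝ) (hβ : 0 < β)
    (x : ℤ → ℝ) (hx : ∀ n : ℤ, 0 < x n)
    (u v : ℤ → ℝ) (hu : ∀ n : ℤ, 0 < u n) (hv : ∀ n : ℤ, 0 < v n)
    (hurec : ∀ n : ℤ, u n = x n / (1 + β * x n * u (n - 1)))
    (hvrec : ∀ n : ℤ, v n = x n / (1 + β * x n * v (n - 1))) :
    (∀ m n : ℤ, m ≤ n →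
      |u n - v n| ≤
        Real.exp ((∑ k ∈ Finset.Icc m n, (Real.log β + 2 * Real.log (x k))) +
          Real.log (x (m - 1)))) ∧
      ((∀ n : ℤ, Tendsto
          (fun m : ℤ =>
            Real.exp ((∑ k ∈ Finset.Icc m n, (Real.log β + 2 * Real.log (x k))) +
              Real.log (x (m - 1))))
          atBot (nhds 0)) →
        u = v) := by
  have hcontract : ∀ n, |u n - v n| ≤ β * x n ^ 2 * |u (n - 1) - v (n - 1)| := fun n => by
    rw [hurec n, hvrec n]
    exact abs_div_one_add_sub_div_one_add_le hβ.le (hx n).le (hu _).le (hv _).le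
  have hu_le : ∀ n, u n ≤ x n := fun n =>
    (hurec n).trans_le (div_one_add_mul_le_self hβ.le (hx n).le (hu _).le)
  have hv_le : ∀ n, v n ≤ x n := fun n =>
    (hvrec n).trans_le (div_one_add_mul_le_self hβ.le (hx n).le (hv _).le)
  have hbound : ∀ m n : ℤ, m ≤ n → |u n - v n| ≤ Real.exp
      ((∑ k ∈ Finset.Icc m n, (Real.log β + 2 * Real.log (x k))) + Real.log (x (m - 1))) := by
    intro m n hmn
    rw [exp_sum_log_add_log_eq_prod_mul hβ hx]
    refine (le_prod_Icc_mul_of_le_mul_pred (fun k => by positivity) hcontract hmn).trans ?_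
    exact mul_le_mul_of_nonneg_left
      (abs_sub_le_of_nonneg_of_le (hu _).le (hu_le _) (hv _).le (hv_le _))
      (Finset.prod_nonneg fun k _ => by positivity)
  refine ⟨hbound, fun hlim => funext fun n => ?_⟩
  have hzero : |u n - v n| ≤ 0 :=
    ge_of_tendsto (hlim n) ((eventually_le_atBot n).mono fun m hm => hbound m n hm)
  exact sub_eq_zero.mp (abs_nonpos_iff.mp hzero)
end

section
/- Let F* : X₀ × U₀ → X̃₀ × Ũ₀ be a bijection and define F : X̃₀ × X₀ × U₀ → X̃₀ × X₀ × U₀ by F(a,b,c) = (F*^{(1)}(b,c), F*^{−1}(a, F*^{(2)}(b,c))). Then the following are equivalent for probability measures μ on X₀, ν on U₀, μ̃ on X̃₀: (a) the pushforward of μ̃ × μ × ν under the last two coordinates of F equals μ × ν; (b) F(μ̃ × μ × ν) = μ̃ × μ × ν; (c) there exists a probability measure ν̃ on Ũ₀ such that F*(μ × ν) = μ̃ × ν̃. -/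
/-!
With `σ (a, b, c) = (b, a, c)`, the map factors as `F = (id × F*⁻¹) ∘ σ ∘ (id × F*)`. If `F*` sends
`μ × ν` to `μ̃ × ν̃`, each factor preserves the relevant product measure (`σ` only swaps the two
copies of `μ̃`), so `F` preserves `μ̃ × μ × ν`. Conversely `F* ((F p).2) = (p.1, F*⁽²⁾ p.2)`, so if
the last two coordinates of `F` preserve `μ × ν`, then `F*` sends `μ × ν` to `μ̃ × ν̃`, where `ν̃` is
the law of `F*⁽²⁾` under `μ × ν`.
-/

open MeasureTheory

namespace MeasurableEquiv

variable {α β γ : Type*} [MeasurableSpace α] [MeasurableSpace β] [MeasurableSpace γ]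

def prodLeftComm : α × β × γ ≃ᵐ β × α × γ :=
  prodAssoc.symm.trans ((prodCongr prodComm (refl γ)).trans prodAssoc)

@[simp]
lemma prodLeftComm_apply (p : α × β × γ) : prodLeftComm p = (p.2.1, p.1, p.2.2) := rfl

end MeasurableEquiv

namespace MeasureTheory

variable {α β γ : Type*} [MeasurableSpace α] [MeasurableSpace β] [MeasurableSpace γ]

lemma measurePreserving_prodLeftComm (μ : Measure α) (ν : Measure β) (ρ : Measure γ)
    [SFinite μ] [SFinite ν] [SFinite ρ] :
    MeasurePreserving MeasurableEquiv.prodLeftComm (μ.prod (ν.prod ρ)) (ν.prod (μ.prod ρ)) :=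
  (measurePreserving_prodAssoc ν μ ρ).comp <|
    (Measure.measurePreserving_swap.prod (MeasurePreserving.id ρ)).comp <|
      (measurePreserving_prodAssoc μ ν ρ).symm _

end MeasureTheory

section TypeII

open MeasurableEquiv

variable {X U X' U' : Type*}
  [MeasurableSpace X] [MeasurableSpace U] [MeasurableSpace X'] [MeasurableSpace U']

def typeIIMap (Fs : (X × U) ≃ᵐ (X' × U')) : X' × X × U ≃ᵐ X' × X × U :=
  ((refl X').prodCongr Fs).trans (prodLeftComm.trans ((refl X').prodCongr Fs.symm))

@[simp]
lemma typeIIMap_apply (Fs : (X × U) ≃ᵐ (X' × U')) (p : X' × X × U) :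
    typeIIMap Fs p = ((Fs p.2).1, Fs.symm (p.1, (Fs p.2).2)) := rfl

lemma measurePreserving_typeIIMap {Fs : (X × U) ≃ᵐ (X' × U')} {ρ : Measure (X × U)}
    {μt : Measure X'} {νt : Measure U'} [SFinite ρ] [SFinite μt] [SFinite νt]
    (hFs : MeasurePreserving Fs ρ (μt.prod νt)) :
    MeasurePreserving (typeIIMap Fs) (μt.prod ρ) (μt.prod ρ) :=
  ((MeasurePreserving.id μt).prod (hFs.symm Fs)).comp <|
    (measurePreserving_prodLeftComm μt μt νt).comp <| (MeasurePreserving.id μt).prod hFs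

lemma map_eq_prod_of_map_typeIIMap_snd {Fs : (X × U) ≃ᵐ (X' × U')} {ρ : Measure (X × U)}
    {μt : Measure X'} [SFinite ρ] [SFinite μt]
    (h : (μt.prod ρ).map (fun p => (typeIIMap Fs p).2) = ρ) :
    ρ.map Fs = μt.prod (ρ.map fun q => (Fs q).2) := by
  have hsnd : Measurable fun p : X' × X × U => (typeIIMap Fs p).2 :=
    (typeIIMap Fs).measurable.snd
  have hcomp : Fs ∘ (fun p => (typeIIMap Fs p).2) = Prod.map id fun q => (Fs q).2 := by
    funext p
    simp [Prod.map]
  rw [← h, Measure.map_map Fs.measurable hsnd, hcomp,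
    ← Measure.map_prod_map _ _ measurable_id Fs.measurable.snd, Measure.map_id, h]

end TypeII

theorem typeII_detailed_balance_tfae
    {X U X' U' : Type*}
    [MeasurableSpace X] [MeasurableSpace U] [MeasurableSpace X'] [MeasurableSpace U']
    (Fs : (X × U) ≃ᵐ (X' × U'))
    (μ : Measure X) (ν : Measure U) (μt : Measure X')
    [IsProbabilityMeasure μ] [IsProbabilityMeasure ν] [IsProbabilityMeasure μt]
    (F : X' × X × U → X' × X × U)
    (hF : ∀ (a : X') (b : X) (c : U),
      F (a, b, c) = ((Fs (b, c)).1, Fs.symm (a, (Fs (b, c)).2))) :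
    [Measure.map (fun p => (F p).2) (μt.prod (μ.prod ν)) = μ.prod ν,
     Measure.map F (μt.prod (μ.prod ν)) = μt.prod (μ.prod ν),
     ∃ νt : Measure U', IsProbabilityMeasure νt ∧
        Measure.map Fs (μ.prod ν) = μt.prod νt].TFAE := by
  obtain rfl : F = typeIIMap Fs := funext fun ⟨a, b, c⟩ => hF a b c
  tfae_have 1 → 3 := fun h =>
    ⟨_, Measure.isProbabilityMeasure_map Fs.measurable.snd.aemeasurable,
      map_eq_prod_of_map_typeIIMap_snd h⟩
  tfae_have 3 → 2 := fun ⟨_, _, h⟩ =>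
    (measurePreserving_typeIIMap ⟨Fs.measurable, h⟩).map_eq
  tfae_have 2 → 1 := fun h => calc
    _ = ((μt.prod (μ.prod ν)).map (typeIIMap Fs)).snd :=
      (Measure.map_map measurable_snd (typeIIMap Fs).measurable).symm
    _ = μ.prod ν := by rw [h, Measure.snd_prod]
  tfae_finish
end

section
/- If X ~ sExp(λ₁, c) and Y ~ sExp(λ₂, c) are independent, with λ₁, λ₂ > 0 and c ∈ ℝ, then min{X,Y} and X − Y are independent, with min{X,Y} ~ sExp(λ₁+λ₂, c) and X − Y having the asymmetric Laplace distribution AL(λ₁, λ₂). -/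
open MeasureTheory ProbabilityTheory

/-- The shifted exponential distribution `sExp(l, c)`:
density `l * exp (-l * (x - c))` on `[c, ∞)`. -/
noncomputable def sExpMeasure (l c : ℝ) : Measure ℝ :=
  volume.withDensity fun x =>
    ENNReal.ofReal (if c ≤ x then l * Real.exp (-l * (x - c)) else 0)

/-- The asymmetric Laplace distribution `AL(l₁, l₂)`:
density proportional to `exp (-l₁ * x)` for `x > 0` and `exp (l₂ * x)` for `x < 0`. -/
noncomputable def alMeasure (l₁ l₂ : ℝ) : Measure ℝ :=
  volume.withDensity fun x =>
    ENNReal.ofReal ((l₁ * l₂ / (l₁ + l₂)) *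
      (if 0 ≤ x then Real.exp (-l₁ * x) else Real.exp (l₂ * x)))

/-!
The map `(x, y) ↦ (min x y, x - y)` preserves Lebesgue measure on `ℝ²`: on `{y ≤ x}` it is the
shear `(x, y) ↦ (y, x - y)`, on `{x < y}` the shear `(x, y) ↦ (x, x - y)`, and these send the two
half-planes onto `{0 ≤ d}` and `{d < 0}`. The joint density `f₁(x) f₂(y)` of `(X, Y)` factors as
`f_{λ₁+λ₂}(min x y) · g(x - y)` with `g` the asymmetric Laplace density, so the law of
`(min X Y, X - Y)` is the product `sExp(λ₁ + λ₂, c) ⊗ AL(λ₁, λ₂)`. Both marginals and the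
independence are read off this product; the normalisation of `AL` is never computed, since its
total mass is that of the law of `X - Y`.
-/

open Set Real

namespace MeasureTheory.MeasurePreserving

variable {α β : Type*} [MeasurableSpace α] [MeasurableSpace β] {μ : Measure α} {ν : Measure β}

theorem piecewise {f g : α → β} {s : Set β} {t : Set α} [DecidablePred (· ∈ t)]
    (hf : MeasurePreserving f μ ν) (hg : MeasurePreserving g μ ν) (hs : MeasurableSet s)
    (hft : f ⁻¹' s = t) (hgt : g ⁻¹' sᶜ = tᶜ) : MeasurePreserving (t.piecewise f g) μ ν := by
  have ht : MeasurableSet t := hft ▸ hf.measurable hs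
  refine ⟨hf.measurable.piecewise ht hg.measurable, ?_⟩
  calc μ.map (t.piecewise f g) = (μ.restrict t + μ.restrict tᶜ).map (t.piecewise f g) := by
        rw [Measure.restrict_add_restrict_compl ht]
    _ = (μ.restrict t).map f + (μ.restrict tᶜ).map g := by
        rw [Measure.map_add _ _ (hf.measurable.piecewise ht hg.measurable),
          Measure.map_congr (piecewise_ae_eq_restrict ht),
          Measure.map_congr (piecewise_ae_eq_restrict_compl ht)]
    _ = ν.restrict s + ν.restrict sᶜ := by
        rw [← hgt, ← hft, (hf.restrict_preimage hs).map_eq, (hg.restrict_preimage hs.compl).map_eq]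
    _ = ν := Measure.restrict_add_restrict_compl hs

theorem map_withDensity_comp {φ : α → β} (h : MeasurePreserving φ μ ν) {g : β → ENNReal}
    (hg : Measurable g) : (μ.withDensity (g ∘ φ)).map φ = ν.withDensity g := by
  ext s hs
  rw [Measure.map_apply h.measurable hs, withDensity_apply _ (h.measurable hs),
    withDensity_apply _ hs]
  exact h.setLIntegral_comp_preimage hs hg

end MeasureTheory.MeasurePreserving

theorem measurePreserving_min_sub :
    MeasurePreserving (fun p : ℝ × ℝ => (min p.1 p.2, p.1 - p.2)) := by
  have h₁ : MeasurePreserving (fun p : ℝ × ℝ => (p.2, p.1 - p.2)) := by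
    rw [Measure.volume_eq_prod]
    exact measurePreserving_prod_sub_swap volume volume
  have h₂ : MeasurePreserving (fun p : ℝ × ℝ => (p.1, p.1 - p.2)) := by
    have h := ((MeasurePreserving.id (volume : Measure ℝ)).prod
      (Measure.measurePreserving_neg (volume : Measure ℝ))).comp
      (measurePreserving_prod_sub (volume : Measure ℝ) volume)
    have e : (Prod.map id Neg.neg ∘ fun z : ℝ × ℝ => (z.1, z.2 - z.1)) =
        fun p => (p.1, p.1 - p.2) := by
      funext p; simp
    rwa [e, ← Measure.volume_eq_prod] at h
  classical
  have hs : MeasurableSet {q : ℝ × ℝ | 0 ≤ q.2} := measurableSet_le measurable_const measurable_snd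
  convert h₁.piecewise h₂ hs (t := {p | p.2 ≤ p.1}) (by ext; simp) (by ext; simp) using 1
  ext p <;> by_cases h : p.2 ≤ p.1
  all_goals simp_all [le_of_not_ge]

theorem indepFun_and_map_eq_of_map_prodMk_eq_prod {Ω α β : Type*} [MeasurableSpace Ω]
    [MeasurableSpace α] [MeasurableSpace β] {μ : Measure Ω} [IsProbabilityMeasure μ]
    {f : Ω → α} {g : Ω → β} {ν₁ : Measure α} {ν₂ : Measure β}
    [IsProbabilityMeasure ν₁] [SFinite ν₂]
    (hf : AEMeasurable f μ) (hg : AEMeasurable g μ)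
    (h : μ.map (fun ω => (f ω, g ω)) = ν₁.prod ν₂) :
    IndepFun f g μ ∧ μ.map f = ν₁ ∧ μ.map g = ν₂ := by
  have hfg : AEMeasurable (fun ω => (f ω, g ω)) μ := hf.prodMk hg
  have hmap_g : μ.map g = ν₂ :=
    calc μ.map g = (μ.map fun ω => (f ω, g ω)).map Prod.snd :=
          (measurable_snd.aemeasurable.map_map_of_aemeasurable hfg).symm
      _ = ν₂ := by rw [h, Measure.map_snd_prod, measure_univ, one_smul]
  have : IsProbabilityMeasure ν₂ := hmap_g ▸ Measure.isProbabilityMeasure_map hg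
  have hmap_f : μ.map f = ν₁ :=
    calc μ.map f = (μ.map fun ω => (f ω, g ω)).map Prod.fst :=
          (measurable_fst.aemeasurable.map_map_of_aemeasurable hfg).symm
      _ = ν₁ := by rw [h, Measure.map_fst_prod, measure_univ, one_smul]
  refine ⟨?_, hmap_f, hmap_g⟩
  rw [indepFun_iff_map_prod_eq_prod_map_map hf hg, h, hmap_f, hmap_g]

noncomputable def sExpPDFReal (l c x : ℝ) : ℝ :=
  if c ≤ x then l * exp (-l * (x - c)) else 0

noncomputable def alPDFReal (l₁ l₂ x : ℝ) : ℝ :=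
  l₁ * l₂ / (l₁ + l₂) * if 0 ≤ x then exp (-l₁ * x) else exp (l₂ * x)

theorem sExpMeasure_eq_withDensity (l c : ℝ) :
    sExpMeasure l c = volume.withDensity fun x => ENNReal.ofReal (sExpPDFReal l c x) := rfl

theorem alMeasure_eq_withDensity (l₁ l₂ : ℝ) :
    alMeasure l₁ l₂ = volume.withDensity fun x => ENNReal.ofReal (alPDFReal l₁ l₂ x) := rfl

instance (l₁ l₂ : ℝ) : SFinite (alMeasure l₁ l₂) :=
  inferInstanceAs (SFinite (volume.withDensity _))

@[fun_prop]
theorem measurable_sExpPDFReal (l c : ℝ) : Measurable (sExpPDFReal l c) :=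
  Measurable.ite measurableSet_Ici (by fun_prop) measurable_const

@[fun_prop]
theorem measurable_alPDFReal (l₁ l₂ : ℝ) : Measurable (alPDFReal l₁ l₂) :=
  (Measurable.ite measurableSet_Ici (by fun_prop) (by fun_prop)).const_mul _

theorem sExpPDFReal_nonneg {l : ℝ} (hl : 0 ≤ l) (c x : ℝ) : 0 ≤ sExpPDFReal l c x := by
  unfold sExpPDFReal; split_ifs <;> positivity

theorem ofReal_sExpPDFReal_eq_exponentialPDF (l c x : ℝ) :
    ENNReal.ofReal (sExpPDFReal l c x) = exponentialPDF l (x - c) := by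
  simp [exponentialPDF_eq, sExpPDFReal, sub_nonneg, neg_mul]

theorem isProbabilityMeasure_sExpMeasure {l : ℝ} (hl : 0 < l) (c : ℝ) :
    IsProbabilityMeasure (sExpMeasure l c) := by
  constructor
  rw [sExpMeasure_eq_withDensity, withDensity_apply _ MeasurableSet.univ, Measure.restrict_univ]
  simp_rw [ofReal_sExpPDFReal_eq_exponentialPDF]
  rw [lintegral_sub_right_eq_self (fun x => exponentialPDF l x) c,
    lintegral_exponentialPDF_eq_one hl]

theorem sExpPDFReal_mul_sExpPDFReal {l₁ l₂ : ℝ} (h : l₁ + l₂ ≠ 0) (c x y : ℝ) :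
    sExpPDFReal l₁ c x * sExpPDFReal l₂ c y =
      sExpPDFReal (l₁ + l₂) c (min x y) * alPDFReal l₁ l₂ (x - y) := by
  have key {A B C D : ℝ} (hsum : A + B = C + D) :
      l₁ * exp A * (l₂ * exp B) = (l₁ + l₂) * exp C * (l₁ * l₂ / (l₁ + l₂) * exp D) :=
    calc l₁ * exp A * (l₂ * exp B) = l₁ * l₂ * exp (A + B) := by rw [exp_add]; ring
      _ = (l₁ + l₂) * exp C * (l₁ * l₂ / (l₁ + l₂) * exp D) := by
        rw [hsum, exp_add]; field_simp
  rcases le_or_gt y x with hyx | hxy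
  · simp only [sExpPDFReal, alPDFReal, min_eq_right hyx, if_pos (sub_nonneg.2 hyx)]
    by_cases hcy : c ≤ y
    · rw [if_pos (hcy.trans hyx), if_pos hcy, if_pos hcy]
      exact key (by ring)
    · simp [hcy]
  · simp only [sExpPDFReal, alPDFReal, min_eq_left hxy.le, if_neg (sub_neg.2 hxy).not_ge]
    by_cases hcx : c ≤ x
    · rw [if_pos (hcx.trans hxy.le), if_pos hcx, if_pos hcx]
      exact key (by ring)
    · simp [hcx]

theorem map_min_sub_sExpMeasure_prod {l₁ l₂ : ℝ} (hl₁ : 0 < l₁) (hl₂ : 0 < l₂) (c : ℝ) :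
    ((sExpMeasure l₁ c).prod (sExpMeasure l₂ c)).map (fun p => (min p.1 p.2, p.1 - p.2)) =
      (sExpMeasure (l₁ + l₂) c).prod (alMeasure l₁ l₂) := by
  simp only [sExpMeasure_eq_withDensity, alMeasure_eq_withDensity]
  rw [prod_withDensity (by fun_prop) (by fun_prop), prod_withDensity (by fun_prop) (by fun_prop),
    ← Measure.volume_eq_prod, ← measurePreserving_min_sub.map_withDensity_comp (g := fun q =>
      ENNReal.ofReal (sExpPDFReal (l₁ + l₂) c q.1) * ENNReal.ofReal (alPDFReal l₁ l₂ q.2))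
      (by fun_prop)]
  congr 2 with p
  rw [Function.comp_apply, ← ENNReal.ofReal_mul (sExpPDFReal_nonneg hl₁.le _ _),
    ← ENNReal.ofReal_mul (sExpPDFReal_nonneg (by positivity) _ _),
    sExpPDFReal_mul_sExpPDFReal (by positivity)]

theorem sExp_min_sub_indep
    {Ω : Type*} [MeasurableSpace Ω] (μ : Measure Ω) [IsProbabilityMeasure μ]
    (l₁ l₂ c : ℝ) (hl₁ : 0 < l₁) (hl₂ : 0 < l₂)
    (X Y : Ω → ℝ) (hX : Measurable X) (hY : Measurable Y)
    (hindep : IndepFun X Y μ)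
    (hlawX : Measure.map X μ = sExpMeasure l₁ c)
    (hlawY : Measure.map Y μ = sExpMeasure l₂ c) :
    IndepFun (fun ω => min (X ω) (Y ω)) (fun ω => X ω - Y ω) μ ∧
      Measure.map (fun ω => min (X ω) (Y ω)) μ = sExpMeasure (l₁ + l₂) c ∧
      Measure.map (fun ω => X ω - Y ω) μ = alMeasure l₁ l₂ := by
  have hjoint : μ.map (fun ω => (min (X ω) (Y ω), X ω - Y ω)) =
      (sExpMeasure (l₁ + l₂) c).prod (alMeasure l₁ l₂) := by
    rw [← map_min_sub_sExpMeasure_prod hl₁ hl₂, ← hlawX, ← hlawY,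
      ← (indepFun_iff_map_prod_eq_prod_map_map hX.aemeasurable hY.aemeasurable).1 hindep,
      Measure.map_map (by fun_prop) (hX.prodMk hY)]
    rfl
  have := isProbabilityMeasure_sExpMeasure (add_pos hl₁ hl₂) c
  exact indepFun_and_map_eq_of_map_prodMk_eq_prod (hX.min hY).aemeasurable
    (hX.sub hY).aemeasurable hjoint
end

section
/- If A ~ Gam(λ₁+λ₂, c), B ~ Gam(λ₁, c), C ~ Gam(λ₂, c) are independent positive random variables (λ₁, λ₂, c > 0), then (B+C, AB/(B+C), AC/(B+C)) has the same joint distribution as (A,B,C). -/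
open MeasureTheory ProbabilityTheory

/-!
On the positive octant the discrete Toda map `T(a, b, c) = (b + c, ab/(b + c), ac/(b + c))` is a
smooth involution with Jacobian determinant `-a/(b + c)`, and the product `f` of the three gamma
densities satisfies `f(p) = a/(b + c) · f(T p)` there: the exponential factors agree because both
`T p` and `p` have coordinate sum `a + b + c`, and the powers of `a`, `b`, `c`, `b + c` balance.
As the product measure lives on the octant, the change of variables formula for the involution
`T` shows that its image again has density `f`.
-/

open Set Real ENNReal

noncomputable section

namespace MeasureTheory

variable {α β : Type*} [MeasurableSpace α] [MeasurableSpace β]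

theorem map_withDensity_comp (μ : Measure α) {T : α → β} (hT : Measurable T) {g : β → ℝ≥0∞}
    (hg : Measurable g) : (μ.withDensity (g ∘ T)).map T = (μ.map T).withDensity g := by
  ext t ht
  rw [Measure.map_apply hT ht, withDensity_apply _ (hT ht), withDensity_apply _ ht,
    setLIntegral_map ht hg hT]
  rfl

variable {E : Type*} [NormedAddCommGroup E] [NormedSpace ℝ E] [FiniteDimensional ℝ E]
  [MeasurableSpace E] [BorelSpace E]

theorem map_restrict_withDensity_eq_self_of_bijOn (μ : Measure E) [μ.IsAddHaarMeasure]
    {s : Set E} (hs : MeasurableSet s) {T : E → E} {T' : E → E →L[ℝ] E} (hT : Measurable T)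
    (hT' : ∀ x ∈ s, HasFDerivWithinAt T (T' x) s x) (hbij : BijOn T s s) {F : E → ℝ≥0∞}
    (hF : Measurable F) (hjac : ∀ x ∈ s, F x = ENNReal.ofReal |(T' x).det| * F (T x)) :
    ((μ.restrict s).withDensity F).map T = (μ.restrict s).withDensity F := by
  have hsplit : (μ.restrict s).withDensity F =
      ((μ.restrict s).withDensity fun x => ENNReal.ofReal |(T' x).det|).withDensity (F ∘ T) := by
    rw [← withDensity_mul₀ (aemeasurable_ofReal_abs_det_fderivWithin μ hs hT')
      (hF.comp hT).aemeasurable]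
    exact withDensity_congr_ae ((ae_restrict_iff' hs).2 (ae_of_all _ hjac))
  conv_lhs => rw [hsplit]
  rw [map_withDensity_comp _ hT hF,
    map_withDensity_abs_det_fderiv_eq_addHaar μ hs.nullMeasurableSet hT' hbij.injOn,
    hbij.image_eq]

end MeasureTheory

def LinearEquiv.prodProdFinThree (R : Type*) [CommRing R] : (R × R × R) ≃ₗ[R] (Fin 3 → R) where
  toFun p := ![p.1, p.2.1, p.2.2]
  invFun v := (v 0, v 1, v 2)
  map_add' p q := by ext i; fin_cases i <;> rfl
  map_smul' r p := by ext i; fin_cases i <;> rfl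
  left_inv p := rfl
  right_inv v := by ext i; fin_cases i <;> rfl

theorem LinearMap.det_eq_det_fin_three {R : Type*} [CommRing R]
    (L : (R × R × R) →ₗ[R] R × R × R) :
    LinearMap.det L =
      !![(L (1, 0, 0)).1, (L (0, 1, 0)).1, (L (0, 0, 1)).1;
         (L (1, 0, 0)).2.1, (L (0, 1, 0)).2.1, (L (0, 0, 1)).2.1;
         (L (1, 0, 0)).2.2, (L (0, 1, 0)).2.2, (L (0, 0, 1)).2.2].det := by
  rw [← LinearMap.det_toMatrix (Module.Basis.ofEquivFun (LinearEquiv.prodProdFinThree R))]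
  congr 1
  ext i j
  fin_cases i <;> fin_cases j <;> rfl

theorem HasFDerivAt.div {E 𝕜 : Type*} [NontriviallyNormedField 𝕜] [NormedAddCommGroup E]
    [NormedSpace 𝕜 E] {c d : E → 𝕜} {c' d' : E →L[𝕜] 𝕜} {x : E}
    (hc : HasFDerivAt c c' x) (hd : HasFDerivAt d d' x) (hx : d x ≠ 0) :
    HasFDerivAt (fun y => c y / d y) ((d x)⁻¹ • c' - (c x / d x ^ 2) • d') x := by
  simp_rw [div_eq_mul_inv]
  refine (hc.mul ((hasDerivAt_inv hx).comp_hasFDerivAt x hd)).congr_fderiv ?_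
  ext v
  simp only [Function.comp_apply, add_apply, smul_apply, smul_eq_mul, sub_apply]
  ring

namespace ProbabilityTheory

@[fun_prop]
theorem measurable_gammaPDF (a r : ℝ) : Measurable (gammaPDF a r) :=
  (measurable_gammaPDFReal a r).ennreal_ofReal

theorem gammaMeasure_eq_withDensity_restrict (a r : ℝ) :
    gammaMeasure a r = (volume.restrict (Ioi 0)).withDensity (gammaPDF a r) := by
  rw [gammaMeasure, ← withDensity_indicator measurableSet_Ioi]
  refine withDensity_congr_ae ?_
  filter_upwards [volume.ae_ne 0] with x hx
  rcases hx.lt_or_gt with hneg | hpos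
  · rw [indicator_of_notMem (notMem_Ioi.2 hneg.le), gammaPDF_of_neg hneg]
  · rw [indicator_of_mem (mem_Ioi.2 hpos)]

theorem gammaMeasure_prod_prod (a₁ a₂ a₃ r : ℝ) :
    (gammaMeasure a₁ r).prod ((gammaMeasure a₂ r).prod (gammaMeasure a₃ r)) =
      (volume.restrict (Ioi 0 ×ˢ Ioi 0 ×ˢ Ioi 0)).withDensity
        fun p => gammaPDF a₁ r p.1 * (gammaPDF a₂ r p.2.1 * gammaPDF a₃ r p.2.2) := by
  simp only [gammaMeasure_eq_withDensity_restrict]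
  rw [prod_withDensity (measurable_gammaPDF _ _) (measurable_gammaPDF _ _),
    prod_withDensity (measurable_gammaPDF _ _) (by fun_prop), Measure.prod_restrict,
    Measure.prod_restrict]
  rfl

theorem gammaPDFReal_eq_exp {a r x : ℝ} (ha : 0 < a) (hr : 0 < r) (hx : 0 < x) :
    gammaPDFReal a r x = exp (a * log r - log (Gamma a) + (a - 1) * log x - r * x) := by
  rw [gammaPDFReal, if_pos hx.le, rpow_def_of_pos hr, rpow_def_of_pos hx,
    ← exp_log (Gamma_pos_of_pos ha), ← exp_sub, ← exp_add, ← exp_add, log_exp]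
  ring_nf

end ProbabilityTheory

namespace DiscreteToda

def positiveOctant : Set (ℝ × ℝ × ℝ) := Ioi 0 ×ˢ Ioi 0 ×ˢ Ioi 0

theorem mem_positiveOctant {p : ℝ × ℝ × ℝ} :
    p ∈ positiveOctant ↔ 0 < p.1 ∧ 0 < p.2.1 ∧ 0 < p.2.2 := by
  simp [positiveOctant]

theorem measurableSet_positiveOctant : MeasurableSet positiveOctant :=
  measurableSet_Ioi.prod (measurableSet_Ioi.prod measurableSet_Ioi)

def dTodaMap (p : ℝ × ℝ × ℝ) : ℝ × ℝ × ℝ :=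
  (p.2.1 + p.2.2, p.1 * p.2.1 / (p.2.1 + p.2.2), p.1 * p.2.2 / (p.2.1 + p.2.2))

theorem measurable_dTodaMap : Measurable dTodaMap := by
  unfold dTodaMap
  fun_prop

theorem mapsTo_dTodaMap : MapsTo dTodaMap positiveOctant positiveOctant := by
  intro p hp
  obtain ⟨ha, hb, hc⟩ := mem_positiveOctant.1 hp
  rw [mem_positiveOctant, dTodaMap]
  exact ⟨by positivity, by positivity, by positivity⟩

theorem dTodaMap_dTodaMap {p : ℝ × ℝ × ℝ} (hp : p ∈ positiveOctant) :
    dTodaMap (dTodaMap p) = p := by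
  obtain ⟨a, b, c⟩ := p
  obtain ⟨ha, hb, hc⟩ : 0 < a ∧ 0 < b ∧ 0 < c := mem_positiveOctant.1 hp
  have hsum : a * b / (b + c) + a * c / (b + c) = a := by field_simp
  simp only [dTodaMap, hsum, Prod.mk.injEq, true_and]
  constructor <;> field_simp

theorem bijOn_dTodaMap : BijOn dTodaMap positiveOctant positiveOctant :=
  InvOn.bijOn ⟨fun _ => dTodaMap_dTodaMap, fun _ => dTodaMap_dTodaMap⟩
    mapsTo_dTodaMap mapsTo_dTodaMap

theorem differentiableAt_dTodaMap {p : ℝ × ℝ × ℝ} (hp : p.2.1 + p.2.2 ≠ 0) :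
    DifferentiableAt ℝ dTodaMap p := by
  unfold dTodaMap
  fun_prop (disch := exact hp)

theorem hasFDerivWithinAt_dTodaMap {p : ℝ × ℝ × ℝ} (hp : p ∈ positiveOctant) :
    HasFDerivWithinAt dTodaMap (fderiv ℝ dTodaMap p) positiveOctant p := by
  obtain ⟨-, hb, hc⟩ := mem_positiveOctant.1 hp
  exact (differentiableAt_dTodaMap (by positivity)).hasFDerivAt.hasFDerivWithinAt

theorem det_fderiv_dTodaMap {p : ℝ × ℝ × ℝ} (hp : p.2.1 + p.2.2 ≠ 0) :
    (fderiv ℝ dTodaMap p).det = -(p.1 / (p.2.1 + p.2.2)) := by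
  have ha : HasFDerivAt (fun q : ℝ × ℝ × ℝ => q.1) _ p := hasFDerivAt_fst (𝕜 := ℝ)
  have hb : HasFDerivAt (fun q : ℝ × ℝ × ℝ => q.2.1) _ p := (hasFDerivAt_snd (𝕜 := ℝ)).fst
  have hc : HasFDerivAt (fun q : ℝ × ℝ × ℝ => q.2.2) _ p := (hasFDerivAt_snd (𝕜 := ℝ)).snd
  have hs := hb.fun_add hc
  have hT : HasFDerivAt dTodaMap _ p :=
    hs.prodMk (((ha.fun_mul hb).div hs hp).prodMk ((ha.fun_mul hc).div hs hp))
  rw [hT.fderiv, ContinuousLinearMap.det, LinearMap.det_eq_det_fin_three, Matrix.det_fin_three]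
  simp only [ContinuousLinearMap.coe_prod, ContinuousLinearMap.toLinearMap_add,
    ContinuousLinearMap.toLinearMap_comp, ContinuousLinearMap.coe_fst, ContinuousLinearMap.coe_snd,
    ContinuousLinearMap.toLinearMap_sub, ContinuousLinearMap.toLinearMap_smul,
    LinearMap.prod_apply, Function.prod_apply, LinearMap.add_apply, LinearMap.coe_comp,
    LinearMap.coe_fst, LinearMap.coe_snd, Function.comp_apply, LinearMap.sub_apply,
    LinearMap.smul_apply, smul_eq_mul, LinearMap.fst_apply, Matrix.of_apply, Matrix.cons_val',
    Matrix.cons_val_zero, Matrix.cons_val_fin_one, Matrix.cons_val_one, Matrix.cons_val]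
  field_simp
  ring

theorem abs_det_fderiv_dTodaMap {p : ℝ × ℝ × ℝ} (hp : p ∈ positiveOctant) :
    |(fderiv ℝ dTodaMap p).det| = p.1 / (p.2.1 + p.2.2) := by
  obtain ⟨ha, hb, hc⟩ := mem_positiveOctant.1 hp
  rw [det_fderiv_dTodaMap (by positivity), abs_neg, abs_of_pos (by positivity)]

theorem gammaPDFReal_dToda_identity {l₁ l₂ c : ℝ} (hl₁ : 0 < l₁) (hl₂ : 0 < l₂) (hc : 0 < c)
    {a b d : ℝ} (ha : 0 < a) (hb : 0 < b) (hd : 0 < d) :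
    a / (b + d) * (gammaPDFReal (l₁ + l₂) c (b + d) *
        (gammaPDFReal l₁ c (a * b / (b + d)) * gammaPDFReal l₂ c (a * d / (b + d)))) =
      gammaPDFReal (l₁ + l₂) c a * (gammaPDFReal l₁ c b * gammaPDFReal l₂ c d) := by
  have hs : 0 < b + d := add_pos hb hd
  have hl : 0 < l₁ + l₂ := add_pos hl₁ hl₂
  simp only [gammaPDFReal_eq_exp hl hc hs, gammaPDFReal_eq_exp hl hc ha,
    gammaPDFReal_eq_exp hl₁ hc (by positivity : 0 < a * b / (b + d)),
    gammaPDFReal_eq_exp hl₂ hc (by positivity : 0 < a * d / (b + d)),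
    gammaPDFReal_eq_exp hl₁ hc hb, gammaPDFReal_eq_exp hl₂ hc hd, ← exp_add]
  rw [← exp_log (by positivity : 0 < a / (b + d)), ← exp_add, exp_eq_exp,
    log_div ha.ne' hs.ne', log_div (by positivity) hs.ne', log_div (by positivity) hs.ne',
    log_mul ha.ne' hb.ne', log_mul ha.ne' hd.ne']
  field_simp
  ring

def gammaProdDensity (l₁ l₂ c : ℝ) (p : ℝ × ℝ × ℝ) : ℝ≥0∞ :=
  gammaPDF (l₁ + l₂) c p.1 * (gammaPDF l₁ c p.2.1 * gammaPDF l₂ c p.2.2)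

theorem measurable_gammaProdDensity (l₁ l₂ c : ℝ) : Measurable (gammaProdDensity l₁ l₂ c) := by
  unfold gammaProdDensity
  fun_prop

theorem gammaProdDensity_eq_jacobian_mul {l₁ l₂ c : ℝ} (hl₁ : 0 < l₁) (hl₂ : 0 < l₂)
    (hc : 0 < c) {p : ℝ × ℝ × ℝ} (hp : p ∈ positiveOctant) :
    gammaProdDensity l₁ l₂ c p =
      ENNReal.ofReal (p.1 / (p.2.1 + p.2.2)) * gammaProdDensity l₁ l₂ c (dTodaMap p) := by
  obtain ⟨ha, hb, hd⟩ := mem_positiveOctant.1 hp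
  have hl : 0 < l₁ + l₂ := add_pos hl₁ hl₂
  simp only [gammaProdDensity, gammaPDF, dTodaMap, ← ENNReal.ofReal_mul,
    gammaPDFReal_nonneg hl hc, gammaPDFReal_nonneg hl₁ hc, div_nonneg ha.le (add_pos hb hd).le]
  rw [gammaPDFReal_dToda_identity hl₁ hl₂ hc ha hb hd]

end DiscreteToda

open DiscreteToda in
theorem dToda_gamma_invariance (l₁ l₂ c : ℝ) (hl₁ : 0 < l₁) (hl₂ : 0 < l₂) (hc : 0 < c) :
    Measure.map
      (fun p : ℝ × ℝ × ℝ =>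
        (p.2.1 + p.2.2, p.1 * p.2.1 / (p.2.1 + p.2.2), p.1 * p.2.2 / (p.2.1 + p.2.2)))
      ((gammaMeasure (l₁ + l₂) c).prod ((gammaMeasure l₁ c).prod (gammaMeasure l₂ c))) =
      (gammaMeasure (l₁ + l₂) c).prod ((gammaMeasure l₁ c).prod (gammaMeasure l₂ c)) := by
  have : (volume : Measure (ℝ × ℝ × ℝ)).IsAddHaarMeasure := by
    rw [Measure.volume_eq_prod]; infer_instance
  have hjac : ∀ p ∈ positiveOctant, gammaProdDensity l₁ l₂ c p =
      ENNReal.ofReal |(fderiv ℝ dTodaMap p).det| * gammaProdDensity l₁ l₂ c (dTodaMap p) :=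
    fun p hp => by
      rw [abs_det_fderiv_dTodaMap hp, gammaProdDensity_eq_jacobian_mul hl₁ hl₂ hc hp]
  change Measure.map dTodaMap _ = _
  rw [gammaMeasure_prod_prod]
  exact map_restrict_withDensity_eq_self_of_bijOn volume measurableSet_positiveOctant
    measurable_dTodaMap (fun p => hasFDerivWithinAt_dTodaMap) bijOn_dTodaMap
    (measurable_gammaProdDensity l₁ l₂ c) hjac
end
end
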